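/- arXiv:1512.01657 — 5 statements merged into one kernel-verified Lean document; each statement's English description precedes it below -/
import Mathlib

section
/- Let n ≥ 1. The volume of the polar of the regular n-simplex with unit edge lengths centered at the origin equals volₙ(△ₙ°) = 2^{n/2} (n+1)^{n+1/2} / n! (that is, 2^{n/2} (n+1)ⁿ √(n+1) / n!). -/
open scoped BigOperators Pointwise RealInnerProductSpace
open MeasureTheory

noncomputable section

/-- The support-function "norm" `‖q‖_T = max_{p ∈ T} ⟨p, q⟩`. -/
def suppNorm {d : ℕ} (T : Set (EuclideanSpace ℝ (Fin d)))
    (q : EuclideanSpace ℝ (Fin d)) : ℝ :=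
  sSup ((fun p : EuclideanSpace ℝ (Fin d) => ⟪p, q⟫) '' T)

/-- Cyclic successor on `Fin m`. -/
def cyc {m : ℕ} (i : Fin m) : Fin m := ⟨(i.val + 1) % m, Nat.mod_lt _ i.pos⟩

/-- The `T`-length of the closed polygonal line through `q 0, …, q (m-1)`. -/
def polyLen {d : ℕ} (T : Set (EuclideanSpace ℝ (Fin d))) {m : ℕ}
    (q : Fin m → EuclideanSpace ℝ (Fin d)) : ℝ :=
  ∑ i : Fin m, suppNorm T (q (cyc i) - q i)

/-- `q` does not fit into a translate of the interior of `K`. -/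
def NotFit {d : ℕ} (K : Set (EuclideanSpace ℝ (Fin d))) {m : ℕ}
    (q : Fin m → EuclideanSpace ℝ (Fin d)) : Prop :=
  ∀ t : EuclideanSpace ℝ (Fin d), ¬ (∀ i, q i - t ∈ interior K)

/-- `ξ_T(K)`: the infimum of `T`-lengths of closed polygonal lines not fitting into a
translate of the interior of `K`. -/
def xi {d : ℕ} (T K : Set (EuclideanSpace ℝ (Fin d))) : ℝ :=
  sInf { L : ℝ | ∃ m : ℕ, 2 ≤ m ∧ ∃ q : Fin m → EuclideanSpace ℝ (Fin d),
    NotFit K q ∧ L = polyLen T q }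

/-- A convex body: compact, convex, with nonempty interior. -/
def IsConvexBody {d : ℕ} (K : Set (EuclideanSpace ℝ (Fin d))) : Prop :=
  IsCompact K ∧ Convex ℝ K ∧ (interior K).Nonempty

/-- The polar set `S° = {p : ⟨p, q⟩ ≤ 1 ∀ q ∈ S}`. -/
def polarSet {d : ℕ} (S : Set (EuclideanSpace ℝ (Fin d))) :
    Set (EuclideanSpace ℝ (Fin d)) :=
  { p | ∀ q ∈ S, ⟪p, q⟫ ≤ 1 }

/-- The permutohedron: the Minkowski sum of all edges of the simplex with vertices `v`. -/
def permutohedron {n : ℕ} (v : Fin (n + 1) → EuclideanSpace ℝ (Fin n)) :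
    Set (EuclideanSpace ℝ (Fin n)) :=
  ∑ p ∈ Finset.univ.filter (fun p : Fin (n + 1) × Fin (n + 1) => p.1 < p.2),
    segment ℝ (v p.1) (v p.2)

end

/-!
For a centred regular simplex with unit edges the Gram matrix of the vertices is
`⟪vᵢ, vⱼ⟫ = δᵢⱼ / 2 - 1 / (2(n+1))`. Since the vertices span, this makes them a tight frame,
`∑ⱼ ⟪p, vⱼ⟫ vⱼ = p / 2`, and then every `p` with `⟪p, vⱼ⟫ ≤ 1` for all `j` is the convex
combination of the points `-2(n+1) vⱼ` with weights `(1 - ⟪p, vⱼ⟫) / (n+1)`. So the polar is the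
simplex scaled by `-2(n+1)`. A simplex is an affine image of the corner simplex, of volume `1/n!`
(the unit `ℓ¹`-ball is made of `2ⁿ` reflected copies of it), under a linear map whose squared
determinant is the Gram determinant of the edges `vᵢ - v₀`; for unit edges that Gram matrix is
`(I + J) / 2`, of determinant `(n+1) / 2ⁿ`.
-/

open Set Finset ENNReal

section CornerSimplex

variable {ι : Type*}

def signFlip (ε : ι → Bool) (x : ι → ℝ) : ι → ℝ := fun i => if ε i then -x i else x i

theorem abs_signFlip (ε : ι → Bool) (x : ι → ℝ) (i : ι) : |signFlip ε x i| = |x i| := by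
  unfold signFlip
  split_ifs <;> simp

variable [Fintype ι]

def cornerSimplex (ι : Type*) [Fintype ι] : Set (ι → ℝ) :=
  Ici 0 ∩ {x | ∑ i, x i ≤ 1}

theorem convex_cornerSimplex : Convex ℝ (cornerSimplex ι) :=
  (convex_Ici 0).inter <| convex_halfSpace_le
    ⟨fun _ _ => Finset.sum_add_distrib, fun _ _ => (Finset.mul_sum _ _ _).symm⟩ 1

theorem measurableSet_cornerSimplex : MeasurableSet (cornerSimplex ι) :=
  measurableSet_Ici.inter (measurableSet_le (by fun_prop) measurable_const)

theorem measurePreserving_signFlip (ε : ι → Bool) : MeasurePreserving (signFlip ε) := by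
  rw [volume_pi]
  convert measurePreserving_pi (fun _ : ι => (volume : Measure ℝ)) (fun _ => volume)
    (f := fun i => if ε i then Neg.neg else id)
    (fun i => by split_ifs; exacts [Measure.measurePreserving_neg volume, .id volume]) using 1
  ext x i
  unfold signFlip
  split_ifs <;> rfl

theorem setOf_sum_abs_le_one_eq_iUnion :
    {x : ι → ℝ | ∑ i, |x i| ≤ 1} = ⋃ ε : ι → Bool, signFlip ε ⁻¹' cornerSimplex ι := by
  ext x
  simp only [Set.mem_ofPred_eq, Set.mem_iUnion, Set.mem_preimage, cornerSimplex,
    Set.mem_inter_iff, Set.mem_Ici, Pi.le_def, Pi.zero_apply]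
  constructor
  · intro hx
    have habs : ∀ i, signFlip (fun i => decide (x i < 0)) x i = |x i| := fun i => by
      unfold signFlip
      by_cases h : x i < 0 <;> simp [h, abs_of_neg, abs_of_nonneg, not_lt.1]
    exact ⟨_, fun i => habs i ▸ abs_nonneg _, by simpa only [habs] using hx⟩
  · rintro ⟨ε, hnonneg, hsum⟩
    simpa only [← abs_signFlip ε x, abs_of_nonneg (hnonneg _)] using hsum

theorem pairwise_aedisjoint_signFlip_preimage :
    Pairwise fun ε η : ι → Bool =>
      AEDisjoint volume (signFlip ε ⁻¹' cornerSimplex ι) (signFlip η ⁻¹' cornerSimplex ι) := by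
  intro ε η hne
  obtain ⟨i, hi⟩ := Function.ne_iff.1 hne
  refine measure_mono_null (fun x ⟨hε, hη⟩ => ?_) (Measure.pi_hyperplane _ i 0)
  have h₁ := hε.1 i
  have h₂ := hη.1 i
  unfold signFlip at h₁ h₂
  show x i = 0
  cases hεi : ε i <;> cases hηi : η i <;> simp_all <;> linarith

theorem volume_cornerSimplex :
    volume (cornerSimplex ι) = ENNReal.ofReal (1 / (Fintype.card ι).factorial) := by
  classical
  rcases isEmpty_or_nonempty ι with hι | hι
  · have : cornerSimplex ι = univ := by
      ext x
      simp [cornerSimplex, Subsingleton.elim x 0]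
    simp [this, volume_pi]
  have hpieces : volume {x : ι → ℝ | ∑ i, |x i| ≤ 1} =
      2 ^ Fintype.card ι * volume (cornerSimplex ι) := by
    rw [setOf_sum_abs_le_one_eq_iUnion, measure_iUnion₀ pairwise_aedisjoint_signFlip_preimage
      fun ε => (measurableSet_cornerSimplex.preimage
        (measurePreserving_signFlip ε).measurable).nullMeasurableSet, tsum_fintype]
    simp [(measurePreserving_signFlip _).measure_preimage
      measurableSet_cornerSimplex.nullMeasurableSet]
  have hball := volume_sum_rpow_le ι (le_refl (1 : ℝ)) 1
  simp only [Real.rpow_one, div_one, ofReal_one, one_pow, one_mul] at hball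
  rw [hpieces, one_add_one_eq_two, Real.Gamma_two, mul_one, Real.Gamma_nat_eq_factorial,
    div_eq_mul_one_div, ENNReal.ofReal_mul (by positivity), ENNReal.ofReal_pow zero_le_two,
    ofReal_ofNat] at hball
  exact (ENNReal.mul_right_inj (by positivity) (by simp)).1 hball

end CornerSimplex

theorem convexHull_range_eq_vadd_image_cornerSimplex {E : Type*} [AddCommGroup E] [Module ℝ E]
    {n : ℕ} (w : Fin (n + 1) → E) :
    convexHull ℝ (range w) =
      w 0 +ᵥ Fintype.linearCombination ℝ (fun i => w i.succ - w 0) '' cornerSimplex (Fin n) := by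
  set L := Fintype.linearCombination ℝ (fun i : Fin n => w i.succ - w 0)
  apply Set.Subset.antisymm
  · refine convexHull_min ?_ ((convex_cornerSimplex.linear_image L).vadd (w 0))
    rintro _ ⟨k, rfl⟩
    induction k using Fin.cases with
    | zero => exact ⟨0, ⟨0, ⟨Set.self_mem_Ici, by simp⟩, map_zero L⟩, add_zero _⟩
    | succ i =>
      refine ⟨_, ⟨Pi.single i 1, ⟨Pi.single_nonneg.2 zero_le_one, by simp⟩, rfl⟩, ?_⟩
      simp [L, vadd_eq_add]
  · rintro _ ⟨_, ⟨x, hx, rfl⟩, rfl⟩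
    have hcomb : w 0 +ᵥ L x = ∑ k, (Fin.cons (1 - ∑ i, x i) x : Fin (n + 1) → ℝ) k • w k := by
      simp [L, Fin.sum_univ_succ, Fintype.linearCombination_apply, vadd_eq_add, smul_sub,
        sub_smul, Finset.sum_smul]
      abel
    simp only [hcomb]
    refine (convex_convexHull ℝ _).sum_mem (fun k _ => ?_) ?_
      fun k _ => subset_convexHull ℝ _ (mem_range_self k)
    · cases k using Fin.cases with
      | zero => simpa using hx.2
      | succ i => exact hx.1 i
    · simp [Fin.sum_univ_succ]

theorem volume_convexHull_range_eq_sqrt_det_gram {n : ℕ}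
    (w : Fin (n + 1) → EuclideanSpace ℝ (Fin n)) :
    volume (convexHull ℝ (range w)) =
      ENNReal.ofReal (√(Matrix.gram ℝ fun i : Fin n => w i.succ - w 0).det / n.factorial) := by
  set u := fun i : Fin n => w i.succ - w 0
  set L : EuclideanSpace ℝ (Fin n) →ₗ[ℝ] EuclideanSpace ℝ (Fin n) :=
    Fintype.linearCombination ℝ u ∘ₗ (WithLp.linearEquiv 2 ℝ (Fin n → ℝ)).toLinearMap
  have himage : Fintype.linearCombination ℝ u '' cornerSimplex (Fin n) =
      L '' (WithLp.ofLp ⁻¹' cornerSimplex (Fin n)) := by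
    rw [LinearMap.coe_comp, Set.image_comp]
    congr
    exact ((WithLp.linearEquiv 2 ℝ (Fin n → ℝ)).toEquiv.image_preimage _).symm
  have hdet : |LinearMap.det L| = √(Matrix.gram ℝ u).det := by
    rw [← LinearMap.normDet_eq_abs_det, ← Real.sqrt_sq (LinearMap.normDet_nonneg L)]
    congr 1
    simpa [L] using L.normDet_sq_eq_det_gram (EuclideanSpace.basisFun (Fin n) ℝ)
  rw [convexHull_range_eq_vadd_image_cornerSimplex, measure_vadd, himage,
    Measure.addHaar_image_linearMap, hdet, (PiLp.volume_preserving_ofLp (Fin n)).measure_preimage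
      measurableSet_cornerSimplex.nullMeasurableSet,
    volume_cornerSimplex, Fintype.card_fin, ← ofReal_mul (Real.sqrt_nonneg _), mul_one_div]

section RegularSimplex

variable {E : Type*} [NormedAddCommGroup E] [InnerProductSpace ℝ E] {n : ℕ}
  {v : Fin (n + 1) → E}

theorem inner_sub_sub_of_norm_sub_eq_one (hedge : ∀ i j, i ≠ j → ‖v i - v j‖ = 1) (i j : Fin n) :
    ⟪v i.succ - v 0, v j.succ - v 0⟫ = (if i = j then 1 / 2 else 0) + 1 / 2 := by
  have hlaw := norm_sub_sq_real (v i.succ - v 0) (v j.succ - v 0)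
  rw [sub_sub_sub_cancel_right, hedge _ _ (Fin.succ_ne_zero i),
    hedge _ _ (Fin.succ_ne_zero j)] at hlaw
  split_ifs with h
  · subst h
    rw [real_inner_self_eq_norm_sq, hedge _ _ (Fin.succ_ne_zero i)]
    norm_num
  · rw [hedge _ _ (Fin.succ_injective _ |>.ne h)] at hlaw
    linarith

theorem det_gram_sub_of_norm_sub_eq_one (hedge : ∀ i j, i ≠ j → ‖v i - v j‖ = 1) :
    (Matrix.gram ℝ fun i : Fin n => v i.succ - v 0).det = (n + 1) / 2 ^ n := by
  have hgram : Matrix.gram ℝ (fun i : Fin n => v i.succ - v 0) = (1 / 2 : ℝ) •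
      (1 + Matrix.replicateCol Unit (fun _ : Fin n => (1 : ℝ)) *
        Matrix.replicateRow Unit (fun _ : Fin n => (1 : ℝ))) := by
    ext i j
    simp [Matrix.gram_apply, inner_sub_sub_of_norm_sub_eq_one hedge, Matrix.one_apply,
      Matrix.mul_apply]
    split_ifs <;> ring
  rw [hgram, Matrix.det_smul, Matrix.det_one_add_replicateCol_mul_replicateRow]
  simp [dotProduct]
  ring

theorem span_range_eq_top_of_norm_sub_eq_one [FiniteDimensional ℝ E]
    (hdim : Module.finrank ℝ E = n) (hedge : ∀ i j, i ≠ j → ‖v i - v j‖ = 1) :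
    Submodule.span ℝ (range v) = ⊤ := by
  have hli : LinearIndependent ℝ fun i : Fin n => v i.succ - v 0 :=
    Matrix.linearIndependent_of_det_gram_ne_zero
      (by rw [det_gram_sub_of_norm_sub_eq_one hedge]; positivity)
  rw [eq_top_iff, ← hli.span_eq_top_of_card_eq_finrank' (by simp [hdim]), Submodule.span_le]
  rintro _ ⟨i, rfl⟩
  exact sub_mem (Submodule.subset_span (mem_range_self _))
    (Submodule.subset_span (mem_range_self _))

theorem norm_sq_of_regular (hsum : ∑ i, v i = 0) (hedge : ∀ i j, i ≠ j → ‖v i - v j‖ = 1)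
    (i : Fin (n + 1)) : ‖v i‖ ^ 2 = n / (2 * (n + 1)) := by
  set B := ∑ j, ‖v j‖ ^ 2
  have hrow : ∀ i, ((n : ℝ) + 1) * ‖v i‖ ^ 2 + B = n := by
    intro i
    calc ((n : ℝ) + 1) * ‖v i‖ ^ 2 + B = ∑ j, (‖v i‖ ^ 2 - 2 * ⟪v i, v j⟫ + ‖v j‖ ^ 2) := by
          simp [B, sum_add_distrib, sum_sub_distrib, ← mul_sum, ← inner_sum, hsum]
      _ = ∑ j, (1 - if i = j then 1 else 0 : ℝ) := sum_congr rfl fun j _ => by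
          rw [← norm_sub_sq_real]
          by_cases h : i = j <;> simp [h, hedge]
      _ = n := by simp
  have hB : B = n / 2 := by
    have := Finset.sum_congr rfl fun i (_ : i ∈ Finset.univ) => hrow i
    simp only [sum_add_distrib, ← mul_sum, sum_const, card_univ, Fintype.card_fin,
      nsmul_eq_mul] at this
    push_cast at this
    nlinarith
  have := hrow i
  rw [hB] at this
  field_simp
  linarith

theorem inner_of_regular (hsum : ∑ i, v i = 0) (hedge : ∀ i j, i ≠ j → ‖v i - v j‖ = 1)
    (i j : Fin (n + 1)) : ⟪v i, v j⟫ = (if i = j then 1 / 2 else 0) - 1 / (2 * (n + 1)) := by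
  split_ifs with h
  · subst h
    rw [real_inner_self_eq_norm_sq, norm_sq_of_regular hsum hedge]
    field_simp
    ring
  · have hlaw := norm_sub_sq_real (v i) (v j)
    rw [hedge i j h, norm_sq_of_regular hsum hedge, norm_sq_of_regular hsum hedge] at hlaw
    field_simp at hlaw ⊢
    linarith

theorem sum_inner_smul_of_regular [FiniteDimensional ℝ E] (hdim : Module.finrank ℝ E = n)
    (hsum : ∑ i, v i = 0) (hedge : ∀ i j, i ≠ j → ‖v i - v j‖ = 1) (p : E) :
    ∑ j, ⟪p, v j⟫ • v j = (1 / 2 : ℝ) • p := by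
  have hframe : ∑ j, (innerₛₗ ℝ (v j)).smulRight (v j) = (1 / 2 : ℝ) • LinearMap.id :=
    LinearMap.ext_on_range (span_range_eq_top_of_norm_sub_eq_one hdim hedge) fun i => by
      simp [inner_of_regular hsum hedge, sub_smul, sum_sub_distrib, ite_smul, ← smul_sum, hsum]
  simpa [real_inner_comm] using LinearMap.congr_fun hframe p

end RegularSimplex

section Polar

variable {d : ℕ}

theorem convex_polarSet (S : Set (EuclideanSpace ℝ (Fin d))) : Convex ℝ (polarSet S) := by
  simp only [polarSet, Set.ofPred_forall]
  exact convex_iInter₂ fun q _ =>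
    convex_halfSpace_le (isBoundedBilinearMap_inner.isBoundedLinearMap_left q).toIsLinearMap 1

theorem polarSet_convexHull (S : Set (EuclideanSpace ℝ (Fin d))) :
    polarSet (convexHull ℝ S) = polarSet S := by
  refine Set.Subset.antisymm (fun p hp q hq => hp q (subset_convexHull ℝ S hq)) fun p hp => ?_
  exact convexHull_min (t := {q | ⟪p, q⟫ ≤ 1}) hp
    (convex_halfSpace_le (isBoundedBilinearMap_inner.isBoundedLinearMap_right p).toIsLinearMap 1)

end Polar

theorem polarSet_convexHull_eq_smul_of_regular {n : ℕ}
    {v : Fin (n + 1) → EuclideanSpace ℝ (Fin n)}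
    (hsum : ∑ i, v i = 0) (hedge : ∀ i j, i ≠ j → ‖v i - v j‖ = 1) :
    polarSet (convexHull ℝ (range v)) = (-(2 * ((n : ℝ) + 1))) • convexHull ℝ (range v) := by
  have hn1 : (n : ℝ) + 1 ≠ 0 := by positivity
  rw [polarSet_convexHull, ← convexHull_smul, ← Set.range_smul]
  apply Set.Subset.antisymm
  · intro p hp
    have hp' : ∀ j, ⟪p, v j⟫ ≤ 1 := fun j => hp _ (mem_range_self j)
    set a := fun j => (1 - ⟪p, v j⟫) / ((n : ℝ) + 1)
    have ha : ∑ j, a j = 1 := by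
      simp [a, ← sum_div, sum_sub_distrib, ← inner_sum, hsum, hn1]
    have hpa : ∑ j, a j • (-(2 * ((n : ℝ) + 1))) • v j = p := by
      calc ∑ j, a j • (-(2 * ((n : ℝ) + 1))) • v j = ∑ j, (2 * ⟪p, v j⟫ - 2) • v j :=
            sum_congr rfl fun j _ => by
              rw [smul_smul]
              congr 1
              simp only [a]
              field_simp
              ring
        _ = (2 : ℝ) • ∑ j, ⟪p, v j⟫ • v j - (2 : ℝ) • ∑ j, v j := by
            simp only [sub_smul, sum_sub_distrib, mul_smul, smul_sum]
        _ = p := by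
            rw [sum_inner_smul_of_regular finrank_euclideanSpace_fin hsum hedge p, hsum, smul_smul]
            norm_num
    rw [← hpa]
    exact (convex_convexHull ℝ _).sum_mem
      (fun j _ => div_nonneg (by linarith [hp' j]) (by positivity)) ha
      fun j _ => subset_convexHull ℝ _ (mem_range_self j)
  · refine convexHull_min ?_ (convex_polarSet _)
    rintro _ ⟨j, rfl⟩ _ ⟨i, rfl⟩
    rw [real_inner_smul_left, inner_of_regular hsum hedge]
    split_ifs
    · field_simp
      linarith [(n.cast_nonneg : (0 : ℝ) ≤ n)]
    · field_simp
      norm_num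

theorem volume_convexHull_of_norm_sub_eq_one {n : ℕ}
    {v : Fin (n + 1) → EuclideanSpace ℝ (Fin n)}
    (hedge : ∀ i j, i ≠ j → ‖v i - v j‖ = 1) :
    volume (convexHull ℝ (range v)) = ENNReal.ofReal (√((n + 1) / 2 ^ n) / n.factorial) := by
  rw [volume_convexHull_range_eq_sqrt_det_gram, det_gram_sub_of_norm_sub_eq_one hedge]

theorem volume_polar_regular_simplex_general (n : ℕ)
    (v : Fin (n + 1) → EuclideanSpace ℝ (Fin n))
    (hsum : ∑ i, v i = 0)
    (hedge : ∀ i j, i ≠ j → ‖v i - v j‖ = 1) :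
    (volume (polarSet (convexHull ℝ (Set.range v)))).toReal
      = Real.sqrt 2 ^ n * ((n : ℝ) + 1) ^ n * Real.sqrt ((n : ℝ) + 1) / n.factorial := by
  rw [polarSet_convexHull_eq_smul_of_regular hsum hedge, Measure.addHaar_smul,
    finrank_euclideanSpace_fin,
    volume_convexHull_of_norm_sub_eq_one hedge, ← ENNReal.ofReal_mul (abs_nonneg _),
    ENNReal.toReal_ofReal (by positivity), abs_pow, abs_neg, abs_of_pos (by positivity),
    Real.sqrt_div' _ (by positivity)]
  have h2 : (2 : ℝ) ^ n = √2 ^ n * √2 ^ n := by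
    rw [← mul_pow, Real.mul_self_sqrt zero_le_two]
  rw [mul_pow, h2, Real.sqrt_mul_self (by positivity)]
  field_simp

/-- `volₙ(△ₙ°) = 2^{n/2} (n+1)^{n+1/2} / n!`. -/
theorem volume_polar_regular_simplex (n : ℕ) (hn : 1 ≤ n)
    (v : Fin (n + 1) → EuclideanSpace ℝ (Fin n))
    (hsum : ∑ i, v i = 0)
    (hedge : ∀ i j, i ≠ j → ‖v i - v j‖ = 1) :
    (volume (polarSet (convexHull ℝ (Set.range v)))).toReal
      = Real.sqrt 2 ^ n * ((n : ℝ) + 1) ^ n * Real.sqrt ((n : ℝ) + 1) / n.factorial :=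
  volume_polar_regular_simplex_general n v hsum hedge
end

section
/- Let n ≥ 1 and let q₀, q₁, …, q_m = q₀ be a closed polygonal line in ℝⁿ each of whose segments is directed along one of v₀,…,vₙ: for each j there are c_j ≥ 0 and i(j) ∈ {0,…,n} with q_{j+1} − q_j = c_j v_{i(j)}. Suppose that for every i ∈ {0,…,n} the total length of the segments directed along v_i satisfies Σ_{j : i(j) = i} c_j = n+1. Then the polygonal line can be covered by a translate of the permutohedron Pₙ: there exists t ∈ ℝⁿ with q_j ∈ Pₙ + t for all j (hence the whole line lies in Pₙ + t). -/
open scoped BigOperators Pointwise RealInnerProductSpace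
open MeasureTheory

/-!
Write `q j = q 0 + ∑ₐ Aₐ(j) vₐ`, where `Aₐ(j)` is the length travelled along `vₐ` before
reaching `q j`. Since `∑ₐ vₐ = 0`, the point `∑ₐ sₐ vₐ` lies in `Pₙ` as soon as `s` is, up to an
additive constant, the score vector of a fractional tournament on `{0, …, n}`; by
Landau's theorem these are the vectors with `∑_{a ∈ S} sₐ ≥ |S| (|S| - 1) / 2` for every `S`, with
equality for `S = univ`.

Translate by `∑ₐ τₐ vₐ`, where `τₐ` is the mean of `Aₐ - (length so far) / (n + 1)` along the
path parametrized by arc length. Landau's inequality for `S` at `q j` then says that a piecewise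
linear function `F` on a circle of length `P = (n + 1)²`, with slopes in `[-α, 1 - α]` for
`α = |S| / (n + 1)`, exceeds its mean by at most `α (1 - α) P / 2`. This holds because around any
point `t₀` the slope bounds keep `F(t₀ + t)` above `F(t₀) - min (α t) ((1 - α) (P - t))`.
-/

open Finset

section Tournament

variable {ι : Type*}

/-- `μ a b` is the share of the game between `a` and `b` won by `a`. -/
structure IsFractionalTournament (R : Finset ι) (μ : ι → ι → ℝ) : Prop where
  nonneg : ∀ a ∈ R, ∀ b ∈ R, 0 ≤ μ a b
  self_eq_zero : ∀ a ∈ R, μ a a = 0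
  add_swap : ∀ a ∈ R, ∀ b ∈ R, a ≠ b → μ a b + μ b a = 1

theorem sum_filter_lt_add_swap [Fintype ι] [LinearOrder ι] {E : Type*} [AddCommMonoid E]
    (F : ι → ι → E) (hF : ∀ a, F a a = 0) :
    ∑ p ∈ univ.filter (fun p : ι × ι => p.1 < p.2), (F p.1 p.2 + F p.2 p.1) =
      ∑ a, ∑ b, F a b := by
  have hswap : ∑ p ∈ univ.filter (fun p : ι × ι => p.1 < p.2), F p.2 p.1 =
      ∑ p ∈ univ.filter (fun p : ι × ι => p.2 < p.1), F p.1 p.2 :=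
    sum_nbij' Prod.swap Prod.swap (by simp) (by simp) (by simp) (by simp) (by simp)
  have hgt : ∑ p ∈ univ.filter (fun p : ι × ι => p.2 < p.1), F p.1 p.2 =
      ∑ p ∈ univ.filter (fun p : ι × ι => ¬ p.1 < p.2), F p.1 p.2 := by
    refine sum_subset (fun p => by simpa using le_of_lt) fun p hp hgt => ?_
    simp only [mem_filter, mem_univ, true_and, not_lt] at hp hgt
    rw [le_antisymm hgt hp, hF]
  rw [sum_add_distrib, hswap, hgt, sum_filter_add_sum_filter_not, Fintype.sum_prod_type']

theorem sum_score_smul_mem_permutohedron {n : ℕ} (v : Fin (n + 1) → EuclideanSpace ℝ (Fin n))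
    {μ : Fin (n + 1) → Fin (n + 1) → ℝ} (hμ : IsFractionalTournament univ μ) :
    ∑ a, (∑ b, μ a b) • v a ∈ permutohedron v := by
  simp_rw [sum_smul]
  rw [← sum_filter_lt_add_swap (fun a b => μ a b • v a)
    (fun a => by simp [hμ.self_eq_zero a (mem_univ a)])]
  refine Set.finsetSum_mem_finsetSum _ _ _ fun p hp => ?_
  have hne : p.1 ≠ p.2 := (mem_filter.mp hp).2.ne
  exact ⟨μ p.1 p.2, μ p.2 p.1, hμ.nonneg _ (mem_univ _) _ (mem_univ _),
    hμ.nonneg _ (mem_univ _) _ (mem_univ _), hμ.add_swap _ (mem_univ _) _ (mem_univ _) hne, rfl⟩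

end Tournament

section Landau

variable {ι : Type*} [DecidableEq ι]

def IsSubmodularOn (R : Finset ι) (h : Finset ι → ℝ) : Prop :=
  ∀ A ⊆ R, ∀ B ⊆ R, h (A ∪ B) + h (A ∩ B) ≤ h A + h B

theorem IsSubmodularOn.min_insert {R : Finset ι} {h : Finset ι → ℝ} {r : ι} (hr : r ∉ R)
    (hh : IsSubmodularOn (insert r R) h) (c : ℝ) :
    IsSubmodularOn R fun S => min (h S) (h (insert r S) - c) := by
  intro A hA B hB
  dsimp only
  have hrA : r ∉ A := fun h => hr (hA h)
  have hrB : r ∉ B := fun h => hr (hB h)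
  have sub := fun X Y (hX : X ⊆ insert r R) (hY : Y ⊆ insert r R) => hh X hX Y hY
  have hA' : insert r A ⊆ insert r R := insert_subset_insert r hA
  have hB' : insert r B ⊆ insert r R := insert_subset_insert r hB
  have hAR : A ⊆ insert r R := hA.trans (subset_insert r R)
  have hBR : B ⊆ insert r R := hB.trans (subset_insert r R)
  have hu₁ := min_le_left (h (A ∪ B)) (h (insert r (A ∪ B)) - c)
  have hu₂ := min_le_right (h (A ∪ B)) (h (insert r (A ∪ B)) - c)
  have hi₁ := min_le_left (h (A ∩ B)) (h (insert r (A ∩ B)) - c)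
  have hi₂ := min_le_right (h (A ∩ B)) (h (insert r (A ∩ B)) - c)
  rcases min_choice (h A) (h (insert r A) - c) with eA | eA <;>
    rcases min_choice (h B) (h (insert r B) - c) with eB | eB <;> rw [eA, eB]
  · linarith [sub A B hAR hBR]
  · have := sub A (insert r B) hAR hB'
    rw [union_insert, inter_insert_of_notMem hrA] at this
    linarith
  · have := sub (insert r A) B hA' hBR
    rw [insert_union, insert_inter_of_notMem hrB] at this
    linarith
  · have := sub (insert r A) (insert r B) hA' hB'
    rw [← insert_union_distrib, ← insert_inter_distrib] at this
    linarith

theorem isSubmodularOn_sum_sub_choose (R : Finset ι) (s : ι → ℝ) :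
    IsSubmodularOn R fun S => ∑ a ∈ S, s a - (#S : ℝ) * (#S - 1) / 2 := by
  intro A _ B _
  have hsum := sum_union_inter (s₁ := A) (s₂ := B) (f := s)
  have hcard : (#(A ∪ B) : ℝ) + #(A ∩ B) = #A + #B := by
    exact_mod_cast card_union_add_card_inter A B
  have hA : (#A : ℝ) ≤ #(A ∪ B) := by exact_mod_cast card_le_card subset_union_left
  have hB : (#B : ℝ) ≤ #(A ∪ B) := by exact_mod_cast card_le_card subset_union_right
  nlinarith [mul_nonneg (sub_nonneg.2 hA) (sub_nonneg.2 hB)]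

theorem sub_le_min_insert_add_card_sdiff {R S₀ T : Finset ι} {h : Finset ι → ℝ} {D : ℝ} {r : ι}
    (hr : r ∉ R) (h_nonneg : ∀ S ⊆ insert r R, 0 ≤ h S) (h_sub : IsSubmodularOn (insert r R) h)
    (hall : ∀ T ⊆ insert r R, D ≤ h T + #(insert r R \ T)) (hS₀ : S₀ ⊆ insert r R)
    (hrS₀ : r ∈ S₀) (hT : T ⊆ R) :
    D - min 1 (min D (h S₀)) ≤
      min (h T) (h (insert r T) - min 1 (min D (h S₀))) + #(R \ T) := by
  have hrT : r ∉ T := fun h => hr (hT h)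
  have hTR := hT.trans (subset_insert r R)
  have hcard : (#(insert r R \ T) : ℝ) = #(R \ T) + 1 := by
    rw [insert_sdiff_of_notMem _ hrT, card_insert_of_notMem (fun h => hr (mem_sdiff.mp h).1)]
    push_cast; ring
  have hcard₀ : (#(insert r R \ (T ∪ S₀)) : ℝ) ≤ #(R \ T) := by
    refine mod_cast card_le_card fun a ha => ?_
    simp only [mem_sdiff, mem_insert, mem_union] at ha ⊢
    rcases ha.1 with rfl | haR
    · exact absurd (Or.inr hrS₀) ha.2
    · exact ⟨haR, fun haT => ha.2 (Or.inl haT)⟩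
  have hall_T := hall T hTR
  have hall_union := hall (T ∪ S₀) (union_subset hTR hS₀)
  have hall_insert := hall (insert r T) (insert_subset_insert r hT)
  rw [insert_sdiff_insert, sdiff_insert_of_notMem hr] at hall_insert
  have hsub := h_sub T hTR S₀ hS₀
  have hinter := h_nonneg (T ∩ S₀) (inter_subset_left.trans hTR)
  have hT₀ := h_nonneg T hTR
  have : D - (h T + #(R \ T)) ≤ min 1 (min D (h S₀)) :=
    le_min (by linarith) (le_min (by linarith [(#(R \ T)).cast_nonneg (α := ℝ)]) (by linarith))
  rw [← min_add_add_right]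
  exact le_min (by linarith) (by linarith)

theorem exists_unitBox_sum_eq_of_isSubmodularOn (R : Finset ι) {h : Finset ι → ℝ} {D : ℝ}
    (h_empty : h ∅ = 0) (h_nonneg : ∀ S ⊆ R, 0 ≤ h S) (h_sub : IsSubmodularOn R h)
    (hD : 0 ≤ D) (hall : ∀ T ⊆ R, D ≤ h T + #(R \ T)) :
    ∃ y : ι → ℝ, (∀ a ∈ R, y a ∈ Set.Icc 0 1) ∧ ∑ a ∈ R, y a = D ∧
      ∀ S ⊆ R, ∑ a ∈ S, y a ≤ h S := by
  induction R using Finset.induction_on generalizing h D with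
  | empty =>
    have hD0 : D = 0 := le_antisymm (by simpa [h_empty] using hall ∅ subset_rfl) hD
    exact ⟨0, by simp, by simp [hD0], fun S hS => by simp [subset_empty.mp hS, h_empty]⟩
  | @insert r R hr ih =>
    -- `y r` is chosen as large as the constraints through `r` allow.
    obtain ⟨S₀, hS₀, hS₀_min⟩ := exists_min_image ((insert r R).powerset.filter (r ∈ ·)) h
      ⟨insert r R, by simp⟩
    simp only [mem_filter, mem_powerset, and_imp] at hS₀ hS₀_min
    set c := min 1 (min D (h S₀))
    have hc₀ : 0 ≤ c := le_min zero_le_one (le_min hD (h_nonneg _ hS₀.1))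
    have hc_le : ∀ S ⊆ R, c ≤ h (insert r S) := fun S hS =>
      (min_le_right _ _).trans <| (min_le_right _ _).trans <|
        hS₀_min _ (insert_subset_insert r hS) (mem_insert_self r S)
    have hRsub : R ⊆ insert r R := subset_insert r R
    set h' : Finset ι → ℝ := fun S => min (h S) (h (insert r S) - c)
    obtain ⟨y, hy_mem, hy_sum, hy_le⟩ := ih (h := h') (D := D - c)
      (by simpa [h', h_empty] using hc_le ∅ (empty_subset R))
      (fun S hS => le_min (h_nonneg S (hS.trans hRsub)) (by linarith [hc_le S hS]))
      (h_sub.min_insert hr c)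
      (sub_nonneg.2 ((min_le_right _ _).trans (min_le_left _ _)))
      fun T hT => sub_le_min_insert_add_card_sdiff hr h_nonneg h_sub hall hS₀.1 hS₀.2 hT
    refine ⟨Function.update y r c, fun a ha => ?_, ?_, fun S hS => ?_⟩
    · rcases mem_insert.mp ha with rfl | ha
      · simpa using ⟨hc₀, min_le_left _ _⟩
      · rw [Function.update_of_ne (ne_of_mem_of_not_mem ha hr)]
        exact hy_mem a ha
    · rw [sum_insert hr, Function.update_self, sum_update_of_notMem hr, hy_sum]
      ring
    · by_cases hrS : r ∈ S
      · have hS' : S.erase r ⊆ R := fun a ha => by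
          simpa [(mem_erase.mp ha).1] using hS (mem_of_mem_erase ha)
        have := (hy_le _ hS').trans (min_le_right (h (S.erase r)) _)
        rw [insert_erase hrS] at this
        rw [sum_update_of_mem hrS, sdiff_singleton_eq_erase]
        linarith
      · rw [sum_update_of_notMem hrS]
        exact (hy_le S ((subset_insert_iff_of_notMem hrS).mp hS)).trans (min_le_left _ _)

theorem exists_isFractionalTournament_of_landau (R : Finset ι) (s : ι → ℝ)
    (hsum : ∑ a ∈ R, s a = (#R : ℝ) * (#R - 1) / 2)
    (hlow : ∀ S ⊆ R, (#S : ℝ) * (#S - 1) / 2 ≤ ∑ a ∈ S, s a) :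
    ∃ μ, IsFractionalTournament R μ ∧ ∀ a ∈ R, ∑ b ∈ R, μ a b = s a := by
  induction R using Finset.induction_on generalizing s with
  | empty => exact ⟨0, ⟨by simp, by simp, by simp⟩, by simp⟩
  | @insert r R hr ih =>
    have hRsub : R ⊆ insert r R := subset_insert r R
    rw [sum_insert hr, card_insert_of_notMem hr] at hsum
    push_cast at hsum
    -- `y a` is the share of the game between `a` and `r` won by `a`.
    obtain ⟨y, hy_mem, hy_sum, hy_le⟩ := exists_unitBox_sum_eq_of_isSubmodularOn R
      (h := fun S => ∑ a ∈ S, s a - (#S : ℝ) * (#S - 1) / 2) (D := #R - s r)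
      (by simp) (fun S hS => sub_nonneg.2 (hlow S (hS.trans hRsub)))
      (isSubmodularOn_sum_sub_choose R s) (by nlinarith [hlow R hRsub]) fun T hT => by
        have hrT : r ∉ T := fun h => hr (hT h)
        have := hlow (insert r T) (insert_subset_insert r hT)
        rw [sum_insert hrT, card_insert_of_notMem hrT] at this
        rw [card_sdiff_of_subset hT, Nat.cast_sub (card_le_card hT)]
        push_cast at this
        nlinarith
    obtain ⟨μ, hμ, hμ_score⟩ := ih (s - y)
      (by simp only [Pi.sub_apply, sum_sub_distrib, hy_sum]; linarith) fun S hS => by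
        have := hy_le S hS
        simp only [Pi.sub_apply, sum_sub_distrib]
        linarith
    have hne : ∀ a ∈ R, a ≠ r := fun a ha => ne_of_mem_of_not_mem ha hr
    refine ⟨fun a b => if a = r then (if b = r then 0 else 1 - y b)
      else if b = r then y a else μ a b, ⟨?_, ?_, ?_⟩, ?_⟩
    · intro a ha b hb
      rcases mem_insert.mp ha with rfl | ha' <;> rcases mem_insert.mp hb with rfl | hb'
      · simp
      · simpa [hne b hb'] using (hy_mem b hb').2
      · simpa [hne a ha'] using (hy_mem a ha').1
      · simpa [hne a ha', hne b hb'] using hμ.nonneg a ha' b hb'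
    · intro a ha
      rcases mem_insert.mp ha with rfl | ha'
      · simp
      · simpa [hne a ha'] using hμ.self_eq_zero a ha'
    · intro a ha b hb hab
      rcases mem_insert.mp ha with rfl | ha' <;> rcases mem_insert.mp hb with rfl | hb'
      · exact absurd rfl hab
      · simp [hne b hb']
      · simp [hne a ha']
      · simpa [hne a ha', hne b hb'] using hμ.add_swap a ha' b hb' hab
    · intro a ha
      rw [sum_insert hr]
      rcases mem_insert.mp ha with rfl | ha'
      · rw [sum_congr rfl (g := fun b => 1 - y b) fun b hb => by simp [hne b hb],
          sum_sub_distrib, hy_sum]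
        simp
      · rw [sum_congr rfl (g := μ a) fun b hb => by simp [hne a ha', hne b hb], hμ_score a ha']
        simp [hne a ha']

theorem exists_isFractionalTournament_of_centered [Fintype ι] (x : ι → ℝ) (hx : ∑ a, x a = 0)
    (hS : ∀ S : Finset ι, ∑ a ∈ S, x a ≤ #S * (Fintype.card ι - #S) / 2) :
    ∃ μ, IsFractionalTournament univ μ ∧
      ∀ a, ∑ b, μ a b = x a + (Fintype.card ι - 1) / 2 := by
  obtain ⟨μ, hμ, hscore⟩ := exists_isFractionalTournament_of_landau univ
    (fun a => x a + (Fintype.card ι - 1) / 2) (by simp [sum_add_distrib, hx]; ring)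
    fun S _ => by
      have hc := hS Sᶜ
      have hsplit := sum_compl_add_sum S x
      rw [card_compl, Nat.cast_sub (card_le_univ S)] at hc
      rw [sum_add_distrib, sum_const, nsmul_eq_mul]
      nlinarith
  exact ⟨μ, hμ, fun a => hscore a (mem_univ a)⟩

end Landau

namespace PiecewiseLinear

variable {ι : Type*}

/-- A list of segments `(length, label)` and slopes `g : ι → ℝ` describe the piecewise linear
function `F` with `F 0 = 0` and slope `g s.2` along a segment `s` of length `s.1`; `rise l g` is
its total increase. -/
def rise : List (ℝ × ι) → (ι → ℝ) →ₗ[ℝ] ℝ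
  | [] => 0
  | s :: l => s.1 • LinearMap.proj s.2 + rise l

/-- `area l g = ∫ F` over `[0, rise l 1]`: a segment of slope `g` and length `d`, followed by
length `r`, contributes `g * d * (d / 2 + r)`. -/
noncomputable def area : List (ℝ × ι) → (ι → ℝ) →ₗ[ℝ] ℝ
  | [] => 0
  | s :: l => (s.1 * (s.1 / 2 + rise l 1)) • LinearMap.proj s.2 + area l

@[simp] theorem rise_nil (g : ι → ℝ) : rise [] g = 0 := rfl

@[simp] theorem rise_cons (s : ℝ × ι) (l : List (ℝ × ι)) (g : ι → ℝ) :
    rise (s :: l) g = s.1 * g s.2 + rise l g := rfl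

@[simp] theorem area_nil (g : ι → ℝ) : area [] g = 0 := rfl

@[simp] theorem area_cons (s : ℝ × ι) (l : List (ℝ × ι)) (g : ι → ℝ) :
    area (s :: l) g = s.1 * (s.1 / 2 + rise l 1) * g s.2 + area l g := rfl

theorem rise_append (l₁ l₂ : List (ℝ × ι)) (g : ι → ℝ) :
    rise (l₁ ++ l₂) g = rise l₁ g + rise l₂ g := by
  induction l₁ with
  | nil => simp
  | cons s l ih => simp [ih, add_assoc]

theorem area_append (l₁ l₂ : List (ℝ × ι)) (g : ι → ℝ) :
    area (l₁ ++ l₂) g = area l₁ g + area l₂ g + rise l₁ g * rise l₂ 1 := by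
  induction l₁ with
  | nil => simp
  | cons s l ih => simp only [List.cons_append, area_cons, rise_cons, rise_append, ih]; ring

theorem rise_nonneg {l : List (ℝ × ι)} (hl : ∀ s ∈ l, 0 ≤ s.1) {g : ι → ℝ} (hg : 0 ≤ g) :
    0 ≤ rise l g := by
  induction l with
  | nil => simp
  | cons s l ih =>
    simp only [List.forall_mem_cons] at hl
    simpa using add_nonneg (mul_nonneg hl.1 (hg s.2)) (ih hl.2)

theorem rise_const (l : List (ℝ × ι)) (c : ℝ) : rise l (fun _ => c) = c * rise l 1 := by
  rw [← smul_eq_mul, ← map_smul]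
  congr 1
  ext
  simp

theorem rise_le_mul_rise_one {l : List (ℝ × ι)} (hl : ∀ s ∈ l, 0 ≤ s.1) {g : ι → ℝ} {c : ℝ}
    (hg : ∀ i, g i ≤ c) : rise l g ≤ c * rise l 1 := by
  have := rise_nonneg hl (g := c • 1 - g) fun i => by simpa using hg i
  rwa [map_sub, map_smul, smul_eq_mul, sub_nonneg] at this

theorem rise_ofFn {m : ℕ} (f : Fin m → ℝ × ι) (g : ι → ℝ) :
    rise (List.ofFn f) g = ∑ i, (f i).1 * g (f i).2 := by
  induction m with
  | zero => simp
  | succ m ih => simp [List.ofFn_succ, Fin.sum_univ_succ, ih]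

/-- `∫₀ˣ min (α t) ((1 - α) (P - t)) dt` for `0 ≤ x ≤ P`. -/
noncomputable def tentIntegral (α P x : ℝ) : ℝ := (α * x ^ 2 - max (x - (1 - α) * P) 0 ^ 2) / 2

theorem trapezoid_le_tentIntegral_sub {α P u u' d d' : ℝ} (huu' : u ≤ u')
    (hd₁ : d ≤ α * u) (hd₂ : d ≤ (1 - α) * (P - u))
    (hd'₁ : d' ≤ α * u') (hd'₂ : d' ≤ (1 - α) * (P - u')) :
    (u' - u) * (d + d') / 2 ≤ tentIntegral α P u' - tentIntegral α P u := by
  unfold tentIntegral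
  have hsq := mul_nonneg (sub_nonneg.2 huu') (sub_nonneg.2 huu')
  rcases le_total u' ((1 - α) * P) with h' | h'
  · rw [max_eq_right (by linarith), max_eq_right (by linarith)]
    nlinarith
  rcases le_total ((1 - α) * P) u with h | h
  · rw [max_eq_left (by linarith), max_eq_left (by linarith)]
    nlinarith
  · rw [max_eq_left (sub_nonneg.2 h'), max_eq_right (sub_nonpos.2 h)]
    nlinarith [mul_nonneg (sub_nonneg.2 h) (sub_nonneg.2 h')]

/-- Induction along the path: `l` is the part still to come, starting at abscissa `u` and
height `a`. -/
theorem neg_area_le_tentIntegral_sub {g : ι → ℝ} {α P : ℝ}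
    (hg : ∀ i, g i ∈ Set.Icc (-α) (1 - α)) (l : List (ℝ × ι)) (hl : ∀ s ∈ l, 0 ≤ s.1)
    {u a : ℝ} (hP : u + rise l 1 = P) (ha : -(α * u) ≤ a) (hend : a + rise l g = 0) :
    -(area l g + a * rise l 1) ≤ tentIntegral α P P - tentIntegral α P u := by
  induction l generalizing u a with
  | nil =>
    obtain rfl : u = P := by simpa using hP
    simp
  | cons s l ih =>
    simp only [List.forall_mem_cons] at hl
    simp only [rise_cons, Pi.one_apply, mul_one] at hP hend
    have hback : ∀ {u a : ℝ} (l : List (ℝ × ι)), (∀ s ∈ l, 0 ≤ s.1) → u + rise l 1 = P →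
        a + rise l g = 0 → -a ≤ (1 - α) * (P - u) := fun l hl hP hend => by
      have := rise_le_mul_rise_one hl fun i => (hg i).2
      rw [← hP]; linarith
    have hstep := trapezoid_le_tentIntegral_sub (u := u) (u' := u + s.1) (d := -a)
      (d' := -(a + s.1 * g s.2)) (le_add_of_nonneg_right hl.1) (by linarith)
      (hback (s :: l) (List.forall_mem_cons.2 hl) (by simp; linarith) (by simp; linarith))
      (by nlinarith [(hg s.2).1]) (hback l hl.2 (by linarith) (by linarith))
    have := @ih hl.2 (u + s.1) (a + s.1 * g s.2) (by linarith)
      (by nlinarith [(hg s.2).1]) (by linarith)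
    simp only [area_cons, rise_cons, Pi.one_apply, mul_one]
    nlinarith

theorem rise_mul_le_area_add {l₁ l₂ : List (ℝ × ι)} (hl : ∀ s ∈ l₁ ++ l₂, 0 ≤ s.1)
    {g : ι → ℝ} {α : ℝ} (hα₀ : 0 ≤ α) (hα₁ : α ≤ 1) (hg : ∀ i, g i ∈ Set.Icc (-α) (1 - α))
    (hrise : rise (l₁ ++ l₂) g = 0) :
    rise l₁ g * rise (l₁ ++ l₂) 1 ≤
      area (l₁ ++ l₂) g + α * (1 - α) * rise (l₁ ++ l₂) 1 ^ 2 / 2 := by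
  have hP : 0 ≤ rise (l₁ ++ l₂) 1 := rise_nonneg hl zero_le_one
  -- Start the path at the vertex between `l₁` and `l₂`; this shifts `F` by that vertex's height.
  have := neg_area_le_tentIntegral_sub hg (l₂ ++ l₁)
    (fun s hs => hl s (List.mem_append.2 (List.mem_append.1 hs).symm))
    (u := 0) (a := 0) rfl (by simp) (by rw [rise_append] at hrise ⊢; linarith)
  simp only [tentIntegral, rise_append, area_append] at this hrise hP ⊢
  rw [max_eq_left (by nlinarith), max_eq_right (by nlinarith),
    eq_neg_of_add_eq_zero_right hrise] at this
  linarith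

end PiecewiseLinear

section Centering

open PiecewiseLinear

variable {ι : Type*} [Fintype ι] [DecidableEq ι]

noncomputable def centeredSingle (a : ι) : ι → ℝ := Pi.single a 1 - fun _ => (Fintype.card ι : ℝ)⁻¹

theorem sum_centeredSingle_apply (S : Finset ι) (i : ι) :
    ∑ a ∈ S, centeredSingle a i = (if i ∈ S then 1 else 0) - #S / Fintype.card ι := by
  simp [centeredSingle, sum_sub_distrib, div_eq_mul_inv]

theorem sum_centeredSingle [Nonempty ι] : ∑ a, centeredSingle a = (0 : ι → ℝ) :=
  funext fun i => by simp [sum_centeredSingle_apply]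

theorem exists_centering [Nonempty ι] {L : List (ℝ × ι)} (hL : ∀ s ∈ L, 0 ≤ s.1)
    (htotal : ∀ a, rise L (Pi.single a 1) = Fintype.card ι) :
    ∃ τ : ι → ℝ, ∑ a, τ a = 0 ∧ ∀ (k : ℕ) (S : Finset ι),
      ∑ a ∈ S, (rise (L.take k) (centeredSingle a) - τ a) ≤ #S * (Fintype.card ι - #S) / 2 := by
  set N : ℝ := (Fintype.card ι : ℝ)
  have hN : 0 < N := Nat.cast_pos.2 Fintype.card_pos
  have hL1 : rise L 1 = N * N := by
    rw [← Finset.univ_sum_single (1 : ι → ℝ), map_sum]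
    simp [htotal, N]
  refine ⟨fun a => area L (centeredSingle a) / N ^ 2, ?_, fun k S => ?_⟩
  · rw [← sum_div, ← map_sum, sum_centeredSingle, map_zero, zero_div]
  set α := #S / N
  have hα₁ : α ≤ 1 := div_le_one_of_le₀ (by simp only [N]; exact_mod_cast card_le_univ S) hN.le
  have hslope : ∀ i, (∑ a ∈ S, centeredSingle a) i ∈ Set.Icc (-α) (1 - α) := fun i => by
    rw [Finset.sum_apply, sum_centeredSingle_apply]
    constructor <;> split_ifs <;> linarith
  have hrise : rise L (∑ a ∈ S, centeredSingle a) = 0 := by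
    simp only [centeredSingle, map_sum, map_sub, rise_const, htotal, hL1]
    exact sum_eq_zero fun a _ => by field_simp; ring
  rw [← List.take_append_drop k L] at hL hrise
  have key := rise_mul_le_area_add hL (by positivity) hα₁ hslope hrise
  rw [List.take_append_drop, hL1] at key
  rw [sum_sub_distrib, ← map_sum, ← sum_div, ← map_sum]
  have hα : α * (1 - α) * (N * N) ^ 2 / 2 = #S * (N - #S) / 2 * N ^ 2 := by
    simp only [α]; field_simp
  rw [sub_le_iff_le_add, ← sub_le_iff_le_add', le_div_iff₀ (by positivity)]
  nlinarith

theorem exists_forall_isFractionalTournament [Nonempty ι] {L : List (ℝ × ι)}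
    (hL : ∀ s ∈ L, 0 ≤ s.1) (htotal : ∀ a, rise L (Pi.single a 1) = Fintype.card ι) :
    ∃ τ : ι → ℝ, ∀ k : ℕ, ∃ μ : ι → ι → ℝ, ∃ δ : ℝ, IsFractionalTournament univ μ ∧
      ∀ a, ∑ b, μ a b = rise (L.take k) (Pi.single a 1) - τ a + δ := by
  obtain ⟨τ, hτ, hbound⟩ := exists_centering hL htotal
  refine ⟨τ, fun k => ?_⟩
  obtain ⟨μ, hμ, hscore⟩ := exists_isFractionalTournament_of_centered
    (fun a => rise (L.take k) (centeredSingle a) - τ a)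
    (by rw [sum_sub_distrib, ← map_sum, sum_centeredSingle, map_zero, hτ, sub_zero])
    (hbound k)
  refine ⟨μ, (Fintype.card ι - 1) / 2 - (Fintype.card ι : ℝ)⁻¹ * rise (L.take k) 1, hμ,
    fun a => ?_⟩
  rw [hscore, centeredSingle, map_sub, rise_const]
  ring

end Centering

open PiecewiseLinear in
theorem eq_add_sum_rise_take {ι : Type*} [Fintype ι] [DecidableEq ι] {E : Type*} [AddCommGroup E]
    [Module ℝ E] {m : ℕ} {q : Fin m → E} {c : Fin m → ℝ} {idx : Fin m → ι} (v : ι → E)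
    (hseg : ∀ j, q (cyc j) - q j = c j • v (idx j)) (j : Fin m) :
    q j = q ⟨0, j.pos⟩ +
      ∑ a, rise ((List.ofFn fun i => (c i, idx i)).take j) (Pi.single a 1) • v a := by
  obtain ⟨k, hk⟩ := j
  induction k with
  | zero => simp
  | succ k ih =>
    have hk' : k < m := k.lt_succ_self.trans hk
    have hcyc : cyc ⟨k, hk'⟩ = ⟨k + 1, hk⟩ := Fin.ext (Nat.mod_eq_of_lt hk)
    have := hseg ⟨k, hk'⟩
    rw [hcyc, sub_eq_iff_eq_add'] at this
    rw [this, ih]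
    simp [List.take_add_one, rise_append, add_smul, sum_add_distrib, add_assoc, hk',
      Pi.single_apply, ite_smul]

open PiecewiseLinear in
theorem fit_into_permutohedron_general (n : ℕ)
    (v : Fin (n + 1) → EuclideanSpace ℝ (Fin n))
    (hsum : ∑ i, v i = 0)
    (m : ℕ) (q : Fin m → EuclideanSpace ℝ (Fin n))
    (c : Fin m → ℝ) (idx : Fin m → Fin (n + 1))
    (hc : ∀ j, 0 ≤ c j)
    (hseg : ∀ j, q (cyc j) - q j = c j • v (idx j))
    (htotal : ∀ i : Fin (n + 1), ∑ j ∈ Finset.univ.filter (fun j => idx j = i), c j = n + 1) :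
    ∃ t : EuclideanSpace ℝ (Fin n), ∀ j, q j - t ∈ permutohedron v := by
  rcases Nat.eq_zero_or_pos m with rfl | hm
  · exact ⟨0, fun j => j.elim0⟩
  set L := List.ofFn fun j => (c j, idx j)
  have hL : ∀ s ∈ L, 0 ≤ s.1 := by simpa [L, List.mem_ofFn] using hc
  have hL_total : ∀ a, rise L (Pi.single a 1) = Fintype.card (Fin (n + 1)) := fun a => by
    simp [L, rise_ofFn, Pi.single_apply, ← Finset.sum_filter, htotal]
  obtain ⟨τ, hτ⟩ := exists_forall_isFractionalTournament hL hL_total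
  refine ⟨q ⟨0, hm⟩ + ∑ a, τ a • v a, fun j => ?_⟩
  obtain ⟨μ, δ, hμ, hscore⟩ := hτ j
  convert sum_score_smul_mem_permutohedron v hμ using 1
  simp only [hscore, add_smul, sub_smul, Finset.sum_add_distrib, Finset.sum_sub_distrib,
    ← Finset.smul_sum, hsum, smul_zero, add_zero]
  rw [eq_add_sum_rise_take v hseg j]
  abel

/-- a closed polygonal line whose segments are directed along `v₀, …, vₙ`
and whose total length along each direction `vᵢ` equals `n + 1` can be covered by a
translate of the permutohedron `Pₙ`. -/
theorem fit_into_permutohedron (n : ℕ) (hn : 1 ≤ n)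
    (v : Fin (n + 1) → EuclideanSpace ℝ (Fin n))
    (hsum : ∑ i, v i = 0)
    (hedge : ∀ i j, i ≠ j → ‖v i - v j‖ = 1)
    (m : ℕ) (q : Fin m → EuclideanSpace ℝ (Fin n))
    (c : Fin m → ℝ) (idx : Fin m → Fin (n + 1))
    (hc : ∀ j, 0 ≤ c j)
    (hseg : ∀ j, q (cyc j) - q j = c j • v (idx j))
    (htotal : ∀ i : Fin (n + 1), ∑ j ∈ Finset.univ.filter (fun j => idx j = i), c j = n + 1) :
    ∃ t : EuclideanSpace ℝ (Fin n), ∀ j, q j - t ∈ permutohedron v :=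
  fit_into_permutohedron_general n v hsum m q c idx hc hseg htotal
end

section
/- Sharp isoperimetric inequality for billiard trajectories in the ℓ₁-norm: for every convex body K ⊂ ℝⁿ, the shortest closed billiard trajectory in K measured in the ℓ₁-norm satisfies ξ_{□ₙ}(K)ⁿ ≤ 2ⁿ · n! · volₙ(K), where □ₙ = [−1,1]ⁿ (so that ‖q‖_{□ₙ} = Σᵢ |qᵢ| is the ℓ₁-norm). -/
open scoped BigOperators Pointwise RealInnerProductSpace
open MeasureTheory

/-!
Let `c j` be the maximal length of a chord of `K` parallel to the `j`-th coordinate axis.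
A maximal chord cannot be translated into `int K`, and run back and forth it has
`ℓ₁`-length `2 c j`; hence `ξ ≤ 2 c j` for every `j`, and `ξⁿ ≤ 2ⁿ ∏ c j`.

Conversely, a convex body containing a segment of length `c j` in every coordinate direction
has volume at least `∏ c j / n!` (the simplex is extremal). Project along the first axis onto
`P`, which inherits the segments in the other directions. If `z ∈ P` is the image of the first
segment, convexity makes the fibre over `z + s • (y - z)`, `y ∈ P`, at least `(1 - s) c 0`
long, so by Fubini and the layer-cake formula `vol K` is at least the volume `c 0 · vol P / n`
of the cone of height `c 0` over `P`; induct.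
-/

open Set Filter Topology

section Chord

variable {E : Type*} [AddCommGroup E] [Module ℝ E]

def chordLengths (K : Set E) (v : E) : Set ℝ :=
  {t | 0 ≤ t ∧ t • v ∈ K - K}

noncomputable def maxChordLength (K : Set E) (v : E) : ℝ :=
  sSup (chordLengths K v)

variable [TopologicalSpace E] [IsTopologicalAddGroup E] [ContinuousSMul ℝ E] [T2Space E]

theorem isCompact_chordLengths {K : Set E} (hK : IsCompact K) {v : E} (hv : v ≠ 0) :
    IsCompact (chordLengths K v) := by
  have hKK : IsCompact (K - K) := by
    rw [← sub_image_prod]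
    exact (hK.prod hK).image continuous_sub
  exact ((isClosedEmbedding_smul_left hv).isCompact_preimage hKK).inter_left isClosed_Ici

theorem le_maxChordLength {K : Set E} (hK : IsCompact K) {v : E} (hv : v ≠ 0) {t : ℝ}
    (ht : t ∈ chordLengths K v) : t ≤ maxChordLength K v :=
  le_csSup (isCompact_chordLengths hK hv).bddAbove ht

theorem maxChordLength_mem {K : Set E} (hK : IsCompact K) (hne : K.Nonempty) {v : E}
    (hv : v ≠ 0) : maxChordLength K v ∈ chordLengths K v := by
  refine (isCompact_chordLengths hK hv).sSup_mem ⟨0, le_rfl, ?_⟩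
  obtain ⟨x, hx⟩ := hne
  simpa using sub_mem_sub hx hx

theorem notFit_maxChordLength {d : ℕ} {K : Set (EuclideanSpace ℝ (Fin d))} (hK : IsCompact K)
    {v : EuclideanSpace ℝ (Fin d)} (hv : v ≠ 0) :
    NotFit K ![0, maxChordLength K v • v] := by
  intro t ht
  have h0 : -t ∈ interior K := by simpa using ht 0
  have h1 : maxChordLength K v • v - t ∈ interior K := by simpa using ht 1
  have hpush : ∀ᶠ ε in 𝓝[>] (0 : ℝ), maxChordLength K v • v - t + ε • v ∈ interior K := by
    refine nhdsWithin_le_nhds (ContinuousAt.preimage_mem_nhds ?_ ?_)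
    · fun_prop
    · simpa using isOpen_interior.mem_nhds h1
  obtain ⟨ε, hε, hεpos⟩ := (hpush.and self_mem_nhdsWithin).exists
  have hnonneg := (maxChordLength_mem hK ⟨-t, interior_subset h0⟩ hv).1
  have hchord : maxChordLength K v + ε ∈ chordLengths K v := by
    refine ⟨by positivity, ?_⟩
    convert sub_mem_sub (interior_subset hε) (interior_subset h0) using 1
    rw [add_smul]
    abel
  linarith [le_maxChordLength hK hv hchord]

end Chord

section Length

variable {d : ℕ}

theorem suppNorm_cube (q : EuclideanSpace ℝ (Fin d)) :
    suppNorm {x : EuclideanSpace ℝ (Fin d) | ∀ i, |x i| ≤ 1} q = ∑ i, |q i| := by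
  refine IsGreatest.csSup_eq ⟨⟨WithLp.toLp 2 fun i => SignType.sign (q i), fun i => ?_, ?_⟩, ?_⟩
  · change |((SignType.sign (q i) : ℝ))| ≤ 1
    generalize SignType.sign (q i) = s
    cases s <;> simp
  · simp [PiLp.inner_apply, self_mul_sign]
  · rintro _ ⟨p, hp, rfl⟩
    simp only [PiLp.inner_apply, RCLike.inner_apply, conj_trivial]
    refine Finset.sum_le_sum fun i _ => ?_
    calc q i * p i ≤ |q i| * |p i| := by rw [← abs_mul]; exact le_abs_self _
      _ ≤ |q i| := mul_le_of_le_one_right (abs_nonneg _) (hp i)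

theorem polyLen_pair (T : Set (EuclideanSpace ℝ (Fin d))) (a b : EuclideanSpace ℝ (Fin d)) :
    polyLen T ![a, b] = suppNorm T (b - a) + suppNorm T (a - b) :=
  Fin.sum_univ_two _

theorem xi_nonneg {T : Set (EuclideanSpace ℝ (Fin d))} (hT : ∀ q, 0 ≤ suppNorm T q)
    (K : Set (EuclideanSpace ℝ (Fin d))) : 0 ≤ xi T K := by
  refine Real.sInf_nonneg ?_
  rintro _ ⟨m, -, q, -, rfl⟩
  exact Finset.sum_nonneg fun i _ => hT _

theorem xi_le_polyLen {T : Set (EuclideanSpace ℝ (Fin d))} (hT : ∀ q, 0 ≤ suppNorm T q)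
    {K : Set (EuclideanSpace ℝ (Fin d))} {m : ℕ} (hm : 2 ≤ m)
    {q : Fin m → EuclideanSpace ℝ (Fin d)} (hq : NotFit K q) : xi T K ≤ polyLen T q := by
  refine csInf_le ⟨0, ?_⟩ ⟨m, hm, q, hq, rfl⟩
  rintro _ ⟨m, -, q, -, rfl⟩
  exact Finset.sum_nonneg fun i _ => hT _

theorem xi_cube_le_two_mul_maxChordLength {K : Set (EuclideanSpace ℝ (Fin d))}
    (hK : IsCompact K) (hne : K.Nonempty) (j : Fin d) :
    xi {x : EuclideanSpace ℝ (Fin d) | ∀ i, |x i| ≤ 1} K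
      ≤ 2 * maxChordLength K (EuclideanSpace.single j 1) := by
  have hv : (EuclideanSpace.single j 1 : EuclideanSpace ℝ (Fin d)) ≠ 0 := by simp
  have hnonneg := (maxChordLength_mem hK hne hv).1
  calc _ ≤ _ := xi_le_polyLen (fun q => by rw [suppNorm_cube]; positivity) le_rfl
        (notFit_maxChordLength hK hv)
    _ = _ := by
      rw [polyLen_pair, suppNorm_cube, suppNorm_cube]
      simp [apply_ite abs, abs_of_nonneg hnonneg]
      ring

end Length

section Fiber

variable {n : ℕ} {K : Set (Fin (n + 1) → ℝ)}

theorem preimage_piFinSuccAbove_symm_zero (K : Set (Fin (n + 1) → ℝ)) :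
    (MeasurableEquiv.piFinSuccAbove (fun _ => ℝ) 0).symm ⁻¹' K = {p | Fin.cons p.1 p.2 ∈ K} := by
  ext
  simp only [MeasurableEquiv.piFinSuccAbove_symm_apply, Fin.insertNthEquiv_zero]
  rfl

theorem volume_eq_lintegral_volume_cons (hK : MeasurableSet K) :
    volume K = ∫⁻ y : Fin n → ℝ, volume {t : ℝ | Fin.cons t y ∈ K} := by
  have he := (volume_preserving_piFinSuccAbove (fun _ : Fin (n + 1) => ℝ) 0).symm
  have hS := he.measurable hK
  rw [← he.measure_preimage hK.nullMeasurableSet, Measure.volume_eq_prod,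
    Measure.prod_apply_symm hS, preimage_piFinSuccAbove_symm_zero]
  rfl

theorem measurable_volume_cons (hK : MeasurableSet K) :
    Measurable fun y : Fin n → ℝ => volume {t : ℝ | Fin.cons t y ∈ K} := by
  have hS := (MeasurableEquiv.piFinSuccAbove (fun _ => ℝ) 0).symm.measurable hK
  rw [preimage_piFinSuccAbove_symm_zero] at hS
  exact measurable_measure_prodMk_right hS

theorem Convex.setOf_cons_mem (hK : Convex ℝ K) (y : Fin n → ℝ) :
    Convex ℝ {t : ℝ | Fin.cons t y ∈ K} := by
  intro a ha b hb α β hα hβ hαβ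
  show Fin.cons (α • a + β • b) y ∈ K
  convert hK ha hb hα hβ hαβ using 1
  ext i
  cases i using Fin.cases with
  | zero => simp
  | succ i => simp [← add_mul, hαβ]

theorem ofReal_le_volume_setOf_cons_mem (hK : Convex ℝ K) {x : Fin (n + 1) → ℝ} (hx : x ∈ K)
    {c : ℝ} (hxc : x + c • Pi.single 0 1 ∈ K) :
    ENNReal.ofReal c ≤ volume {t : ℝ | Fin.cons t (Fin.tail x) ∈ K} := by
  have hcons : x + c • Pi.single 0 1 = Fin.cons (x 0 + c) (Fin.tail x) := by
    ext i
    cases i using Fin.cases <;> simp [Fin.tail]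
  have hIcc : Icc (x 0) (x 0 + c) ⊆ {t : ℝ | Fin.cons t (Fin.tail x) ∈ K} :=
    (hK.setOf_cons_mem _).ordConnected.out (by simpa using hx)
      (show Fin.cons (x 0 + c) (Fin.tail x) ∈ K from hcons ▸ hxc)
  simpa using measure_mono (μ := volume) hIcc

end Fiber

section Cone

open Module

theorem lintegral_Ioc_ofReal_one_sub_div_pow {L : ℝ} (hL : 0 < L) (d : ℕ) :
    ∫⁻ t in Ioc 0 L, ENNReal.ofReal ((1 - t / L) ^ d) = ENNReal.ofReal (L / (d + 1)) := by
  have hcont : Continuous fun t : ℝ => (1 - t / L) ^ d := by fun_prop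
  rw [← ofReal_integral_eq_lintegral_ofReal (hcont.integrableOn_Icc.mono_set Ioc_subset_Icc_self)]
  · rw [← intervalIntegral.integral_of_le hL.le,
      intervalIntegral.integral_comp_div (fun u => (1 - u) ^ d) hL.ne',
      intervalIntegral.integral_comp_sub_left (fun u => u ^ d)]
    simp [div_self hL.ne', integral_pow, div_eq_mul_inv]
  · refine (ae_restrict_iff' measurableSet_Ioc).2 (ae_of_all _ fun t ht => ?_)
    have : t / L ≤ 1 := (div_le_one hL).2 ht.2
    exact pow_nonneg (by linarith) d

variable {E : Type*} [NormedAddCommGroup E] [NormedSpace ℝ E] [MeasurableSpace E] [BorelSpace E]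
  [FiniteDimensional ℝ E] (μ : Measure E) [μ.IsAddHaarMeasure]

theorem ofReal_mul_le_lintegral_of_cone {f : E → ENNReal} (hf : AEMeasurable f μ) {P : Set E}
    {z : E} {L : ℝ} (hL : 0 < L)
    (hcone : ∀ s ∈ Icc (0 : ℝ) 1, ∀ y ∈ P,
      ENNReal.ofReal ((1 - s) * L) ≤ f (AffineMap.homothety z s y)) :
    ENNReal.ofReal (L / (finrank ℝ E + 1)) * μ P ≤ ∫⁻ x, f x ∂μ := by
  -- truncating at `L` makes `f` real-valued, as the layer-cake formula needs, and loses
  -- nothing on the cone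
  set g : E → ℝ := fun x => (min (f x) (ENNReal.ofReal L)).toReal
  have hgf : ∀ x, ENNReal.ofReal (g x) ≤ f x := fun x => by
    rw [ENNReal.ofReal_toReal (by simp)]
    exact min_le_left _ _
  have hlevel : ∀ t ∈ Ioc 0 L,
      ENNReal.ofReal ((1 - t / L) ^ finrank ℝ E) * μ P ≤ μ {x | t ≤ g x} := by
    intro t ht
    have hs : 1 - t / L ∈ Icc (0 : ℝ) 1 := by
      constructor
      · linarith [(div_le_one hL).2 ht.2]
      · linarith [div_pos ht.1 hL]
    rw [← abs_of_nonneg (pow_nonneg hs.1 _), ← Measure.addHaar_image_homothety μ z]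
    refine measure_mono ?_
    rintro _ ⟨y, hy, rfl⟩
    have hft := hcone _ hs y hy
    rw [show (1 - (1 - t / L)) * L = t by field_simp; ring] at hft
    show t ≤ (min (f _) (ENNReal.ofReal L)).toReal
    exact (ENNReal.toReal_ofReal ht.1.le).ge.trans
      (ENNReal.toReal_mono (by simp) (le_min hft (ENNReal.ofReal_le_ofReal ht.2)))
  calc ENNReal.ofReal (L / (finrank ℝ E + 1)) * μ P
      = ∫⁻ t in Ioc 0 L, ENNReal.ofReal ((1 - t / L) ^ finrank ℝ E) * μ P := by
        rw [lintegral_mul_const _ (by fun_prop), lintegral_Ioc_ofReal_one_sub_div_pow hL]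
    _ ≤ ∫⁻ t in Ioc 0 L, μ {x | t ≤ g x} := setLIntegral_mono' measurableSet_Ioc hlevel
    _ ≤ ∫⁻ t in Ioi 0, μ {x | t ≤ g x} := lintegral_mono_set Ioc_subset_Ioi_self
    _ = ∫⁻ x, ENNReal.ofReal (g x) ∂μ :=
        (lintegral_eq_lintegral_meas_le μ (ae_of_all _ fun _ => ENNReal.toReal_nonneg)
          (hf.min aemeasurable_const).ennreal_toReal).symm
    _ ≤ ∫⁻ x, f x ∂μ := lintegral_mono hgf

end Cone

section Volume

theorem Fin.tail_homothety {n : ℕ} (b : Fin (n + 1) → ℝ) (s : ℝ) (x : Fin (n + 1) → ℝ) :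
    Fin.tail (AffineMap.homothety b s x) = AffineMap.homothety (Fin.tail b) s (Fin.tail x) := by
  ext
  simp [AffineMap.homothety_apply, Fin.tail]

theorem ofReal_prod_div_factorial_le_volume {n : ℕ} {K : Set (Fin n → ℝ)} (hK : Convex ℝ K)
    (hKc : IsCompact K) (hne : K.Nonempty) {L : Fin n → ℝ} (hL : ∀ j, 0 ≤ L j)
    (hseg : ∀ j, L j • Pi.single j 1 ∈ K - K) :
    ENNReal.ofReal ((∏ j, L j) / n.factorial) ≤ volume K := by
  induction n with
  | zero => simp [hne.eq_univ, volume_pi]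
  | succ n ih =>
    rcases (hL 0).eq_or_lt with h0 | h0pos
    · simp [Fin.prod_univ_succ, ← h0]
    have hP : ENNReal.ofReal ((∏ j : Fin n, L j.succ) / n.factorial)
        ≤ volume (Fin.tail '' K) := by
      refine ih (L := fun j => L j.succ) (hK.linear_image (LinearMap.funLeft ℝ ℝ Fin.succ))
        (hKc.image (by fun_prop)) (hne.image _) (fun j => hL _) fun j => ?_
      have := mem_image_of_mem (LinearMap.funLeft ℝ ℝ Fin.succ) (hseg j.succ)
      rw [image_sub] at this
      convert this using 1
      ext i
      simp [Pi.single_apply]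
    obtain ⟨a, ha, b, hb, hab⟩ := hseg 0
    have hcone : ∀ s ∈ Icc (0 : ℝ) 1, ∀ y ∈ Fin.tail '' K,
        ENNReal.ofReal ((1 - s) * L 0)
          ≤ volume {t : ℝ | Fin.cons t (AffineMap.homothety (Fin.tail b) s y) ∈ K} := by
      rintro s hs _ ⟨x, hx, rfl⟩
      have hbx : AffineMap.homothety b s x ∈ K := by
        rw [AffineMap.homothety_eq_lineMap]
        exact hK.lineMap_mem hb hx hs
      have hax : AffineMap.homothety b s x + ((1 - s) * L 0) • Pi.single 0 1 ∈ K := by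
        convert hK.lineMap_mem ha hx hs using 1
        rw [← AffineMap.homothety_eq_lineMap]
        simp only [AffineMap.homothety_apply, vsub_eq_sub, vadd_eq_add]
        rw [mul_smul, ← hab]
        module
      rw [← Fin.tail_homothety]
      exact ofReal_le_volume_setOf_cons_mem hK hbx hax
    have hKm := hKc.isClosed.measurableSet
    calc ENNReal.ofReal ((∏ j, L j) / (n + 1).factorial)
        = ENNReal.ofReal (L 0 / (n + 1))
          * ENNReal.ofReal ((∏ j : Fin n, L j.succ) / n.factorial) := by
          rw [← ENNReal.ofReal_mul (by positivity), Fin.prod_univ_succ, Nat.factorial_succ]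
          push_cast
          field_simp
      _ ≤ ENNReal.ofReal (L 0 / (Module.finrank ℝ (Fin n → ℝ) + 1))
          * volume (Fin.tail '' K) := by
          rw [Module.finrank_fin_fun]
          gcongr
      _ ≤ ∫⁻ y, volume {t : ℝ | Fin.cons t y ∈ K} :=
          ofReal_mul_le_lintegral_of_cone volume (measurable_volume_cons hKm).aemeasurable
            h0pos hcone
      _ = volume K := (volume_eq_lintegral_volume_cons hKm).symm

theorem ofReal_prod_div_factorial_le_volume_euclidean {n : ℕ}
    {K : Set (EuclideanSpace ℝ (Fin n))} (hK : Convex ℝ K) (hKc : IsCompact K) (hne : K.Nonempty)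
    {L : Fin n → ℝ} (hL : ∀ j, 0 ≤ L j) (hseg : ∀ j, L j • EuclideanSpace.single j 1 ∈ K - K) :
    ENNReal.ofReal ((∏ j, L j) / n.factorial) ≤ volume K := by
  let e := (EuclideanSpace.equiv (Fin n) ℝ).symm
  rw [← (PiLp.volume_preserving_toLp (Fin n)).measure_preimage
    hKc.isClosed.measurableSet.nullMeasurableSet]
  refine ofReal_prod_div_factorial_le_volume (hK.linear_preimage e.toLinearMap)
    (e.toHomeomorph.isCompact_preimage.2 hKc) ?_ hL fun j => ?_
  · obtain ⟨x, hx⟩ := hne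
    exact ⟨x.ofLp, by simpa [e] using hx⟩
  · obtain ⟨x, hx, y, hy, hxy : x - y = _⟩ := hseg j
    refine ⟨x.ofLp, by simpa [e] using hx, y.ofLp, by simpa [e] using hy, ?_⟩
    change x.ofLp - y.ofLp = _
    rw [← WithLp.ofLp_sub, hxy]
    ext i
    simp [Pi.single_apply]

end Volume

/-- the sharp isoperimetric inequality for billiards in the `ℓ₁`-norm:
`ξ_{□ₙ}(K)ⁿ ≤ 2ⁿ · n! · volₙ(K)` with `□ₙ = [-1,1]ⁿ`. -/
theorem billiard_isoperimetric_l1 (n : ℕ)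
    (K : Set (EuclideanSpace ℝ (Fin n))) (hK : IsConvexBody K) :
    xi { x : EuclideanSpace ℝ (Fin n) | ∀ i, |x i| ≤ 1 } K ^ n
      ≤ 2 ^ n * n.factorial * (volume K).toReal := by
  obtain ⟨hKc, hKconv, hKint⟩ := hK
  have hne : K.Nonempty := hKint.mono interior_subset
  set c : Fin n → ℝ := fun j => maxChordLength K (EuclideanSpace.single j 1)
  have hchord : ∀ j, c j ∈ chordLengths K (EuclideanSpace.single j 1) := fun j =>
    maxChordLength_mem hKc hne (by simp)
  have hvol := ofReal_prod_div_factorial_le_volume_euclidean hKconv hKc hne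
    (fun j => (hchord j).1) (fun j => (hchord j).2)
  rw [ENNReal.ofReal_le_iff_le_toReal hKc.measure_lt_top.ne,
    div_le_iff₀ (by positivity)] at hvol
  have hxi := xi_nonneg (fun q => by rw [suppNorm_cube]; positivity) K
  calc _ = ∏ _j : Fin n, xi { x : EuclideanSpace ℝ (Fin n) | ∀ i, |x i| ≤ 1 } K := by simp
    _ ≤ ∏ j, 2 * c j := Finset.prod_le_prod (fun _ _ => hxi) fun j _ =>
        xi_cube_le_two_mul_maxChordLength hKc hne j
    _ = 2 ^ n * ∏ j, c j := by simp [Finset.prod_mul_distrib]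
    _ ≤ 2 ^ n * n.factorial * (volume K).toReal := by
        rw [mul_assoc]; gcongr; linarith
end

section
/- Let n ≥ 2 and let L ⊂ ℝ^{n−1} be a convex body with 0 ∈ int L. Suppose that for every convex body M ⊂ ℝ^{n−1} one has vol_{n−1}(M) · vol_{n−1}(L) ≥ ξ_L(M)^{n−1} / (n−1)!. Then for every convex body K ⊂ ℝⁿ one has volₙ(K) · volₙ(L × [−1,1]) ≥ ξ_{L×[−1,1]}(K)ⁿ / n!, where L × [−1,1] ⊂ ℝ^{n−1} × ℝ = ℝⁿ. -/
open scoped BigOperators Pointwise RealInnerProductSpace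
open MeasureTheory

/-- The Lagrangian-product body `L × [-1,1] ⊆ ℝ^{m} × ℝ = ℝ^{m+1}`. -/
def prodSeg {m : ℕ} (L : Set (EuclideanSpace ℝ (Fin m))) :
    Set (EuclideanSpace ℝ (Fin (m + 1))) :=
  { x | (show EuclideanSpace ℝ (Fin m) from WithLp.toLp 2 fun i => x i.castSucc) ∈ L ∧
        |x (Fin.last m)| ≤ 1 }

/-!
Write `π` for the projection forgetting the last coordinate and `ξ = ξ_{L×[-1,1]}(K)`.
Lifting polygons horizontally gives `ξ ≤ ξ_L(πK)`, so the hypothesis for `M = πK` yields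
`ξ^{n-1} / (n-1)! ≤ vol(πK) vol(L)`. The two-point polygon `{0, d eₙ}` has length `2d`, so for
`2d < ξ` it fits into a translate of `int K`: `K` contains a vertical chord of length `d`. By
convexity the fibre of `K` over the homothetic copy of `πK` with ratio `1 - u` about the foot of the
chord has length at least `u d`; the layer-cake formula then gives `vol K ≥ d vol(πK) / n`, and
letting `d → ξ/2` finishes the proof.
-/

open Set Module

noncomputable section

namespace Viterbo

variable {m : ℕ}

def splitLast (m : ℕ) :
    EuclideanSpace ℝ (Fin (m + 1)) ≃L[ℝ] EuclideanSpace ℝ (Fin m) × ℝ :=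
  LinearEquiv.toContinuousLinearEquiv
    { toFun := fun x => (WithLp.toLp 2 fun i => x i.castSucc, x (Fin.last m))
      invFun := fun p => WithLp.toLp 2 (Fin.snoc (α := fun _ => ℝ) (fun i => p.1 i) p.2)
      map_add' := fun _ _ => rfl
      map_smul' := fun _ _ => rfl
      left_inv := fun x => by ext j; refine Fin.lastCases ?_ (fun i => ?_) j <;> simp
      right_inv := fun p => by ext <;> simp }

def proj (x : EuclideanSpace ℝ (Fin (m + 1))) : EuclideanSpace ℝ (Fin m) := (splitLast m x).1

def lift (y : EuclideanSpace ℝ (Fin m)) (s : ℝ) : EuclideanSpace ℝ (Fin (m + 1)) :=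
  (splitLast m).symm (y, s)

@[simp] theorem proj_apply (x : EuclideanSpace ℝ (Fin (m + 1))) (i : Fin m) :
    proj x i = x i.castSucc := rfl

theorem splitLast_apply (x : EuclideanSpace ℝ (Fin (m + 1))) :
    splitLast m x = (proj x, x (Fin.last m)) := rfl

@[simp] theorem proj_lift (y : EuclideanSpace ℝ (Fin m)) (s : ℝ) : proj (lift y s) = y := by
  simp [proj, lift]

@[simp] theorem lift_last (y : EuclideanSpace ℝ (Fin m)) (s : ℝ) :
    lift y s (Fin.last m) = s :=
  congrArg Prod.snd ((splitLast m).apply_symm_apply (y, s))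

theorem proj_sub (x x' : EuclideanSpace ℝ (Fin (m + 1))) : proj (x - x') = proj x - proj x' := by
  simp [proj]

theorem lift_sub (y y' : EuclideanSpace ℝ (Fin m)) (s s' : ℝ) :
    lift y s - lift y' s' = lift (y - y') (s - s') := by
  rw [lift, lift, lift, ← map_sub, Prod.mk_sub_mk]

theorem neg_lift (y : EuclideanSpace ℝ (Fin m)) (s : ℝ) : -lift y s = lift (-y) (-s) := by
  rw [lift, lift, ← map_neg, Prod.neg_mk]

theorem smul_lift (c : ℝ) (y : EuclideanSpace ℝ (Fin m)) (s : ℝ) :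
    c • lift y s = lift (c • y) (c * s) := by
  rw [lift, lift, ← map_smul, Prod.smul_mk, smul_eq_mul]

theorem mem_prodSeg {L : Set (EuclideanSpace ℝ (Fin m))} {x : EuclideanSpace ℝ (Fin (m + 1))} :
    x ∈ prodSeg L ↔ proj x ∈ L ∧ |x (Fin.last m)| ≤ 1 := Iff.rfl

theorem inner_eq_inner_proj_add (p q : EuclideanSpace ℝ (Fin (m + 1))) :
    ⟪p, q⟫ = ⟪proj p, proj q⟫ + p (Fin.last m) * q (Fin.last m) := by
  simp only [PiLp.inner_apply, RCLike.inner_apply, conj_trivial, Fin.sum_univ_castSucc]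
  simp [mul_comm]

theorem proj_isOpenMap : IsOpenMap (proj : EuclideanSpace ℝ (Fin (m + 1)) → _) :=
  isOpenMap_fst.comp (splitLast m).toHomeomorph.isOpenMap

theorem continuous_proj : Continuous (proj : EuclideanSpace ℝ (Fin (m + 1)) → _) :=
  continuous_fst.comp (splitLast m).continuous

theorem splitLast_add_lift_zero (x : EuclideanSpace ℝ (Fin (m + 1))) (d : ℝ) :
    splitLast m (x + lift 0 d) = (proj x, x (Fin.last m) + d) := by
  rw [map_add, lift, ContinuousLinearEquiv.apply_symm_apply, splitLast_apply, Prod.mk_add_mk,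
    add_zero]

section Xi

variable {d : ℕ} {T K : Set (EuclideanSpace ℝ (Fin d))}

theorem suppNorm_nonneg (hT : (0 : EuclideanSpace ℝ (Fin d)) ∈ T) (q : EuclideanSpace ℝ (Fin d)) :
    0 ≤ suppNorm T q :=
  Real.sSup_nonneg' ⟨0, ⟨0, hT, inner_zero_left _⟩, le_rfl⟩

theorem polyLen_nonneg (hT : (0 : EuclideanSpace ℝ (Fin d)) ∈ T) {k : ℕ}
    (q : Fin k → EuclideanSpace ℝ (Fin d)) : 0 ≤ polyLen T q :=
  Finset.sum_nonneg fun _ _ => suppNorm_nonneg hT _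

theorem xi_nonneg (hT : (0 : EuclideanSpace ℝ (Fin d)) ∈ T) : 0 ≤ xi T K :=
  Real.sInf_nonneg <| by rintro _ ⟨k, -, q, -, rfl⟩; exact polyLen_nonneg hT q

theorem xi_le_polyLen (hT : (0 : EuclideanSpace ℝ (Fin d)) ∈ T) {k : ℕ} (hk : 2 ≤ k)
    {q : Fin k → EuclideanSpace ℝ (Fin d)} (hq : NotFit K q) : xi T K ≤ polyLen T q :=
  csInf_le ⟨0, by rintro _ ⟨k, -, q, -, rfl⟩; exact polyLen_nonneg hT q⟩ ⟨k, hk, q, hq, rfl⟩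

theorem polyLen_pair (a b : EuclideanSpace ℝ (Fin d)) :
    polyLen T ![a, b] = suppNorm T (b - a) + suppNorm T (a - b) := by
  simp [polyLen, Fin.sum_univ_two, cyc]

theorem exists_notFit_of_isBounded (hd : 0 < d) (hK : Bornology.IsBounded K) :
    ∃ q : Fin 2 → EuclideanSpace ℝ (Fin d), NotFit K q := by
  have : Nonempty (Fin d) := ⟨⟨0, hd⟩⟩
  obtain ⟨v, hv⟩ := exists_norm_eq (EuclideanSpace ℝ (Fin d))
    (add_nonneg Metric.diam_nonneg zero_le_one : 0 ≤ Metric.diam K + 1)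
  refine ⟨![0, v], fun t ht => ?_⟩
  have hdist := Metric.dist_le_diam_of_mem hK (interior_subset (ht 1)) (interior_subset (ht 0))
  simp only [Matrix.cons_val_one, Matrix.cons_val_zero, dist_sub_right, dist_zero_right,
    hv] at hdist
  linarith

end Xi

section ProdSeg

variable {L : Set (EuclideanSpace ℝ (Fin m))} {K : Set (EuclideanSpace ℝ (Fin (m + 1)))}

theorem IsConvexBody.image_proj (hK : IsConvexBody K) : IsConvexBody (proj '' K) :=
  ⟨hK.1.image continuous_proj,
    hK.2.1.linear_image ((LinearMap.fst ℝ _ ℝ).comp (splitLast m).toLinearEquiv.toLinearMap),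
    (hK.2.2.image proj).mono (proj_isOpenMap.image_interior_subset K)⟩

theorem zero_mem_prodSeg (h0 : (0 : EuclideanSpace ℝ (Fin m)) ∈ L) :
    (0 : EuclideanSpace ℝ (Fin (m + 1))) ∈ prodSeg L :=
  ⟨h0, by simp⟩

theorem lift_mem_prodSeg {y : EuclideanSpace ℝ (Fin m)} (hy : y ∈ L) {s : ℝ} (hs : |s| ≤ 1) :
    lift y s ∈ prodSeg L :=
  mem_prodSeg.2 ⟨by rwa [proj_lift], by rwa [lift_last]⟩

theorem suppNorm_prodSeg_lift_zero (u : EuclideanSpace ℝ (Fin m)) :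
    suppNorm (prodSeg L) (lift u 0) = suppNorm L u := by
  have hinner : ∀ p, ⟪p, lift u 0⟫ = ⟪proj p, u⟫ := fun p => by
    simp [inner_eq_inner_proj_add p]
  unfold suppNorm
  congr 1
  ext r
  constructor
  · rintro ⟨p, hp, rfl⟩
    exact ⟨proj p, hp.1, (hinner p).symm⟩
  · rintro ⟨a, ha, rfl⟩
    exact ⟨lift a 0, lift_mem_prodSeg ha (by simp), (hinner _).trans (by rw [proj_lift])⟩

theorem suppNorm_prodSeg_lift_vertical (hL : L.Nonempty) (t : ℝ) :
    suppNorm (prodSeg L) (lift 0 t) = |t| := by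
  have hinner : ∀ p, ⟪p, lift 0 t⟫ = p (Fin.last m) * t := fun p => by
    simp [inner_eq_inner_proj_add p]
  obtain ⟨a, ha⟩ := hL
  refine IsGreatest.csSup_eq ⟨⟨lift a (SignType.sign t), ?_, ?_⟩, ?_⟩
  · exact lift_mem_prodSeg ha (by rcases lt_trichotomy t 0 with h | h | h <;> simp [h])
  · simp [hinner]
  · rintro _ ⟨p, hp, rfl⟩
    calc ⟪p, lift 0 t⟫ = p (Fin.last m) * t := hinner p
      _ ≤ |p (Fin.last m)| * |t| := (le_abs_self _).trans (abs_mul _ _).le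
      _ ≤ |t| := mul_le_of_le_one_left (abs_nonneg t) hp.2

theorem NotFit.lift {k : ℕ} {q : Fin k → EuclideanSpace ℝ (Fin m)} (hq : NotFit (proj '' K) q)
    (s : ℝ) : NotFit K fun i => lift (q i) s := fun t ht =>
  hq (proj t) fun i => by
    simpa [proj_sub] using proj_isOpenMap.image_interior_subset K ⟨_, ht i, rfl⟩

theorem polyLen_prodSeg_lift {k : ℕ} (q : Fin k → EuclideanSpace ℝ (Fin m)) (s : ℝ) :
    polyLen (prodSeg L) (fun i => lift (q i) s) = polyLen L q :=
  Finset.sum_congr rfl fun i _ => by rw [lift_sub, sub_self, suppNorm_prodSeg_lift_zero]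

theorem xi_prodSeg_le (hm : 0 < m) (h0 : (0 : EuclideanSpace ℝ (Fin m)) ∈ L)
    (hK : Bornology.IsBounded (proj '' K)) : xi (prodSeg L) K ≤ xi L (proj '' K) := by
  obtain ⟨q, hq⟩ := exists_notFit_of_isBounded hm hK
  refine le_csInf ⟨_, 2, le_rfl, q, hq, rfl⟩ ?_
  rintro _ ⟨k, hk, q, hq, rfl⟩
  simpa only [polyLen_prodSeg_lift] using xi_le_polyLen (zero_mem_prodSeg h0) hk (NotFit.lift hq 0)

theorem xi_prodSeg_pow_le (h0 : (0 : EuclideanSpace ℝ (Fin m)) ∈ L)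
    (hK : Bornology.IsBounded (proj '' K)) : xi (prodSeg L) K ^ m ≤ xi L (proj '' K) ^ m := by
  rcases Nat.eq_zero_or_pos m with rfl | hm
  · simp
  · exact pow_le_pow_left₀ (xi_nonneg (zero_mem_prodSeg h0)) (xi_prodSeg_le hm h0 hK) m

theorem exists_vertical_chord (h0 : (0 : EuclideanSpace ℝ (Fin m)) ∈ L) {d : ℝ} (hd : 0 ≤ d)
    (hξ : 2 * d < xi (prodSeg L) K) : ∃ x ∈ K, x + lift 0 d ∈ K := by
  by_contra! hK
  have hq : NotFit K ![0, lift 0 d] := fun t ht =>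
    hK (0 - t) (interior_subset (ht 0)) (by simpa [neg_add_eq_sub] using interior_subset (ht 1))
  have hle := xi_le_polyLen (zero_mem_prodSeg h0) le_rfl hq
  rw [polyLen_pair, sub_zero, zero_sub, neg_lift, neg_zero, suppNorm_prodSeg_lift_vertical ⟨0, h0⟩,
    suppNorm_prodSeg_lift_vertical ⟨0, h0⟩, abs_neg, abs_of_nonneg hd] at hle
  linarith

end ProdSeg

section Prism

theorem integral_one_sub_div_pow {d : ℝ} (hd : d ≠ 0) (n : ℕ) :
    ∫ t in (0 : ℝ)..d, (1 - t / d) ^ n = d / (n + 1) := by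
  rw [intervalIntegral.integral_comp_sub_div (fun x => x ^ n) hd]
  simp [integral_pow, div_eq_mul_inv, hd]

theorem ofReal_mul_le_volume_fiber {E : Type*} [AddCommGroup E] [Module ℝ E] {K : Set (E × ℝ)} (hK : Convex ℝ K) {y₀ : E} {c₀ d : ℝ}
    (hd : 0 ≤ d) (hseg : ∀ τ ∈ Icc 0 d, (y₀, c₀ + τ) ∈ K) {u : ℝ} (hu : u ∈ Icc (0 : ℝ) 1)
    {y : E} (hy : y ∈ AffineMap.homothety y₀ (1 - u) '' (Prod.fst '' K)) :
    ENNReal.ofReal (u * d) ≤ volume (Prod.mk y ⁻¹' K) := by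
  obtain ⟨_, ⟨⟨y', s'⟩, hys', rfl⟩, rfl⟩ := hy
  have hmem : ∀ τ ∈ Icc 0 d,
      u * (c₀ + τ) + (1 - u) * s' ∈ Prod.mk (AffineMap.homothety y₀ (1 - u) y') ⁻¹' K :=
    fun τ hτ => by
      rw [mem_preimage]
      convert hK (hseg τ hτ) hys' hu.1 (sub_nonneg.2 hu.2) (add_sub_cancel _ _) using 1
      ext
      · simp only [AffineMap.homothety_apply, vsub_eq_sub, vadd_eq_add, Prod.fst_add,
          Prod.smul_fst]
        module
      · simp
  have hfiber : Convex ℝ (Prod.mk (AffineMap.homothety y₀ (1 - u) y') ⁻¹' K) :=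
    fun s₁ h₁ s₂ h₂ a b ha hb hab => by
      simpa [← add_smul, hab] using hK h₁ h₂ ha hb hab
  calc ENNReal.ofReal (u * d)
      = volume (Icc (u * (c₀ + 0) + (1 - u) * s') (u * (c₀ + d) + (1 - u) * s')) := by
        rw [Real.volume_Icc]; ring_nf
    _ ≤ _ := measure_mono (hfiber.ordConnected.out (hmem 0 ⟨le_rfl, hd⟩) (hmem d ⟨hd, le_rfl⟩))

theorem ofReal_mul_measure_fst_le {E : Type*} [NormedAddCommGroup E] [NormedSpace ℝ E]
    [MeasurableSpace E] [BorelSpace E] [FiniteDimensional ℝ E] (μ : Measure E)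
    [μ.IsAddHaarMeasure] {K : Set (E × ℝ)} (hKc : IsCompact K) (hK : Convex ℝ K) {y₀ : E}
    {c₀ d : ℝ} (hd : 0 < d) (hseg : ∀ τ ∈ Icc 0 d, (y₀, c₀ + τ) ∈ K) :
    ENNReal.ofReal (d / (finrank ℝ E + 1)) * μ (Prod.fst '' K) ≤ μ.prod volume K := by
  set g : E → ℝ := fun y => (volume (Prod.mk y ⁻¹' K)).toReal
  have hfin : ∀ y, volume (Prod.mk y ⁻¹' K) ≠ ⊤ := fun y =>
    ((measure_mono (show Prod.mk y ⁻¹' K ⊆ Prod.snd '' K from fun s hs => ⟨_, hs, rfl⟩)).trans_lt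
      (hKc.image continuous_snd).measure_lt_top).ne
  have hlevel : ∀ t ∈ Ioc 0 d,
      μ (AffineMap.homothety y₀ (1 - t / d) '' (Prod.fst '' K)) ≤ μ {y | t ≤ g y} :=
    fun t ht => measure_mono fun y hy => by
      have hu : t / d ∈ Icc (0 : ℝ) 1 := ⟨div_nonneg ht.1.le hd.le, div_le_one_of_le₀ ht.2 hd.le⟩
      have := ofReal_mul_le_volume_fiber hK hd.le hseg hu hy
      rwa [div_mul_cancel₀ _ hd.ne', ENNReal.ofReal_le_iff_le_toReal (hfin y)] at this
  have hg : Measurable g := (measurable_measure_prodMk_left hKc.measurableSet).ennreal_toReal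
  calc ENNReal.ofReal (d / (finrank ℝ E + 1)) * μ (Prod.fst '' K)
      = ∫⁻ t in Ioc 0 d, ENNReal.ofReal ((1 - t / d) ^ finrank ℝ E) * μ (Prod.fst '' K) := by
        rw [lintegral_mul_const _ (by fun_prop), ← ofReal_integral_eq_lintegral_ofReal,
          ← intervalIntegral.integral_of_le hd.le, integral_one_sub_div_pow hd.ne']
        · exact (by fun_prop : Continuous fun t : ℝ => (1 - t / d) ^ finrank ℝ E).integrableOn_Ioc
        · exact ae_restrict_of_forall_mem measurableSet_Ioc fun t ht =>
            pow_nonneg (sub_nonneg.2 (div_le_one_of_le₀ ht.2 hd.le)) _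
    _ = ∫⁻ t in Ioc 0 d, μ (AffineMap.homothety y₀ (1 - t / d) '' (Prod.fst '' K)) :=
        setLIntegral_congr_fun measurableSet_Ioc fun t ht => by
          rw [Measure.addHaar_image_homothety,
            abs_of_nonneg (pow_nonneg (sub_nonneg.2 (div_le_one_of_le₀ ht.2 hd.le)) _)]
    _ ≤ ∫⁻ t in Ioc 0 d, μ {y | t ≤ g y} := setLIntegral_mono' measurableSet_Ioc hlevel
    _ ≤ ∫⁻ t in Ioi 0, μ {y | t ≤ g y} := lintegral_mono_set Ioc_subset_Ioi_self
    _ = ∫⁻ y, ENNReal.ofReal (g y) ∂μ :=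
        (lintegral_eq_lintegral_meas_le μ (ae_of_all _ fun _ => ENNReal.toReal_nonneg)
          hg.aemeasurable).symm
    _ = μ.prod volume K := by
        simp_rw [Measure.prod_apply hKc.measurableSet, g, ENNReal.ofReal_toReal (hfin _)]

end Prism

section Volume

theorem measurePreserving_splitLast : MeasurePreserving (splitLast m) := by
  have h := ((PiLp.volume_preserving_toLp (Fin m)).prod (MeasurePreserving.id volume)).comp
    (Measure.measurePreserving_swap.comp ((volume_preserving_piFinSuccAbove (fun _ => ℝ)
      (Fin.last m)).comp (PiLp.volume_preserving_ofLp (Fin (m + 1)))))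
  convert h using 1
  · funext x
    ext i <;> simp [splitLast_apply, Fin.init]
  · exact Measure.volume_eq_prod _ _

theorem volume_preimage_splitLast (s : Set (EuclideanSpace ℝ (Fin m) × ℝ)) :
    volume (splitLast m ⁻¹' s) = volume s :=
  measurePreserving_splitLast.measure_preimage_emb
    (splitLast m).toHomeomorph.measurableEmbedding s

theorem volume_image_splitLast (s : Set (EuclideanSpace ℝ (Fin (m + 1)))) :
    volume (splitLast m '' s) = volume s := by
  rw [← volume_preimage_splitLast, (splitLast m).injective.preimage_image]

theorem volume_prodSeg (L : Set (EuclideanSpace ℝ (Fin m))) :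
    volume (prodSeg L) = 2 * volume L := by
  have h : prodSeg L = splitLast m ⁻¹' (L ×ˢ Icc (-1) 1) := by
    ext x
    simp [mem_prodSeg, splitLast_apply, abs_le]
  rw [h, volume_preimage_splitLast, Measure.volume_eq_prod, Measure.prod_prod, Real.volume_Icc,
    mul_comm]
  norm_num

variable {K : Set (EuclideanSpace ℝ (Fin (m + 1)))}

theorem ofReal_mul_volume_proj_le (hKc : IsCompact K) (hK : Convex ℝ K) {d : ℝ} (hd : 0 < d)
    {x : EuclideanSpace ℝ (Fin (m + 1))} (hx : x ∈ K) (hxd : x + lift 0 d ∈ K) :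
    ENNReal.ofReal (d / (m + 1)) * volume (proj '' K) ≤ volume K := by
  have hseg : ∀ τ ∈ Icc 0 d, (proj x, x (Fin.last m) + τ) ∈ splitLast m '' K := fun τ hτ => by
    refine ⟨x + lift 0 τ, ?_, splitLast_add_lift_zero x τ⟩
    have hτd : (τ / d) • lift 0 d = lift (0 : EuclideanSpace ℝ (Fin m)) τ := by
      rw [smul_lift, smul_zero, div_mul_cancel₀ _ hd.ne']
    rw [← hτd]
    exact hK.add_smul_mem hx hxd ⟨div_nonneg hτ.1 hd.le, div_le_one_of_le₀ hτ.2 hd.le⟩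
  have h := ofReal_mul_measure_fst_le volume (hKc.image (splitLast m).continuous)
    (hK.linear_image (splitLast m).toLinearEquiv.toLinearMap) hd hseg
  rwa [finrank_euclideanSpace_fin, image_image, ← Measure.volume_eq_prod,
    volume_image_splitLast] at h

theorem xi_div_two_mul_volume_proj_le {L : Set (EuclideanSpace ℝ (Fin m))}
    (h0 : (0 : EuclideanSpace ℝ (Fin m)) ∈ L) (hKc : IsCompact K) (hK : Convex ℝ K) :
    xi (prodSeg L) K / 2 * (volume (proj '' K)).toReal / (m + 1) ≤ (volume K).toReal := by
  set c := (volume (proj '' K)).toReal / (m + 1)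
  have hchord : Iio (xi (prodSeg L) K / 2) ⊆ {d | d * c ≤ (volume K).toReal} := fun d hd => by
    rcases le_or_gt d 0 with hd0 | hd0
    · exact (mul_nonpos_of_nonpos_of_nonneg hd0 (by positivity)).trans ENNReal.toReal_nonneg
    obtain ⟨x, hx, hxd⟩ := exists_vertical_chord h0 hd0.le (by linarith [mem_Iio.1 hd])
    have h := ENNReal.toReal_mono hKc.measure_lt_top.ne
      (ofReal_mul_volume_proj_le hKc hK hd0 hx hxd)
    rwa [ENNReal.toReal_mul, ENNReal.toReal_ofReal (by positivity), div_mul_eq_mul_div,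
      mul_div_assoc] at h
  have hclosed : IsClosed {d : ℝ | d * c ≤ (volume K).toReal} :=
    isClosed_le (by fun_prop) continuous_const
  rw [mul_div_assoc]
  exact hclosed.closure_subset_iff.2 hchord (by rw [closure_Iio]; exact mem_Iic.2 le_rfl)

end Volume

end Viterbo

end

open Viterbo

theorem viterbo_add_segment_general (m : ℕ)
    (L : Set (EuclideanSpace ℝ (Fin m)))
    (h0 : (0 : EuclideanSpace ℝ (Fin m)) ∈ interior L)
    (hind : ∀ M : Set (EuclideanSpace ℝ (Fin m)), IsConvexBody M →
      (volume M).toReal * (volume L).toReal ≥ xi L M ^ m / m.factorial)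
    (K : Set (EuclideanSpace ℝ (Fin (m + 1)))) (hK : IsConvexBody K) :
    (volume K).toReal * (volume (prodSeg L)).toReal
      ≥ xi (prodSeg L) K ^ (m + 1) / (m + 1).factorial := by
  set ξ := xi (prodSeg L) K
  have hL0 : (0 : EuclideanSpace ℝ (Fin m)) ∈ L := interior_subset h0
  have hPK : IsConvexBody (proj '' K) := hK.image_proj
  have hξ0 : 0 ≤ ξ := xi_nonneg (zero_mem_prodSeg hL0)
  have hsection : ξ ^ m / m.factorial ≤ (volume (proj '' K)).toReal * (volume L).toReal :=
    (div_le_div_of_nonneg_right (xi_prodSeg_pow_le hL0 hPK.1.isBounded) (by positivity)).trans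
      (hind _ hPK)
  have hvol := xi_div_two_mul_volume_proj_le hL0 hK.1 hK.2.1
  rw [volume_prodSeg, ENNReal.toReal_mul, ENNReal.toReal_ofNat, Nat.factorial_succ, Nat.cast_mul,
    Nat.cast_succ, ge_iff_le]
  calc ξ ^ (m + 1) / ((m + 1) * m.factorial) = ξ / (m + 1) * (ξ ^ m / m.factorial) := by
        rw [pow_succ]; field_simp
    _ ≤ ξ / (m + 1) * ((volume (proj '' K)).toReal * (volume L).toReal) := by gcongr
    _ = ξ / 2 * (volume (proj '' K)).toReal / (m + 1) * (2 * (volume L).toReal) := by ring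
    _ ≤ (volume K).toReal * (2 * (volume L).toReal) := by gcongr

/-- if Viterbo's conjecture holds for all Lagrangian products `M × L` in
dimension `n - 1 = m`, then it holds for `K × (L × [-1,1])` in dimension `n = m + 1`. -/
theorem viterbo_add_segment (m : ℕ) (hm : 1 ≤ m)
    (L : Set (EuclideanSpace ℝ (Fin m))) (hL : IsConvexBody L)
    (h0 : (0 : EuclideanSpace ℝ (Fin m)) ∈ interior L)
    (hind : ∀ M : Set (EuclideanSpace ℝ (Fin m)), IsConvexBody M →
      (volume M).toReal * (volume L).toReal ≥ xi L M ^ m / m.factorial)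
    (K : Set (EuclideanSpace ℝ (Fin (m + 1)))) (hK : IsConvexBody K) :
    (volume K).toReal * (volume (prodSeg L)).toReal
      ≥ xi (prodSeg L) K ^ (m + 1) / (m + 1).factorial :=
  viterbo_add_segment_general m L h0 hind K hK
end

section
/- Let K ⊂ ℝⁿ and T ⊂ ℝⁿ be convex bodies containing the origin in their interiors. Then the infimum defining ξ_T(K) is attained by a tuple with at most n+1 points: there exist m with 2 ≤ m ≤ n+1 and points q₁,…,q_m ∈ ℝⁿ such that {q₁,…,q_m} does not fit into a translate of int K and ℓ_T(q₁,…,q_m) = ξ_T(K). -/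
open scoped BigOperators Pointwise RealInnerProductSpace
open MeasureTheory

/-!
By Helly's theorem, a tuple that does not fit into a translate of `interior K` has at most
`n + 1` vertices that already do not fit, and by the triangle inequality for `‖·‖_T` the closed
polygon through these vertices, kept in their cyclic order, is no longer than the original one
(repeating a vertex costs nothing). Hence `ξ_T(K)` is the infimum of `polyLen T` over
non-fitting `(n + 1)`-tuples with first vertex `0`. These form a closed set on which
`polyLen T` grows at least linearly with the norm, because `0 ∈ interior T`, so the infimum is
attained.
-/

open Fin.NatCast Finset Filter

section Telescoping
variable {G : Type*} [AddCommGroup G] {N : G → ℝ}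

lemma le_sum_Ico_of_subadditive (h0 : N 0 = 0) (hadd : ∀ x y, N (x + y) ≤ N x + N y)
    (f : ℕ → G) {a b : ℕ} (hab : a ≤ b) :
    N (f b - f a) ≤ ∑ i ∈ Ico a b, N (f (i + 1) - f i) := by
  rw [← Finset.sum_Ico_sub f hab]
  exact le_sum_of_subadditive N h0.le hadd _ _

lemma sum_le_sum_Ico_of_monotone (h0 : N 0 = 0) (hadd : ∀ x y, N (x + y) ≤ N x + N y)
    (f : ℕ → G) {b : ℕ → ℕ} (hb : Monotone b) (k : ℕ) :
    ∑ j ∈ range k, N (f (b (j + 1)) - f (b j)) ≤ ∑ i ∈ Ico (b 0) (b k), N (f (i + 1) - f i) := by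
  induction k with
  | zero => simp
  | succ k ih =>
    rw [sum_range_succ, ← sum_Ico_consecutive _ (hb k.zero_le) (hb k.le_succ)]
    exact add_le_add ih (le_sum_Ico_of_subadditive h0 hadd f (hb k.le_succ))

end Telescoping

lemma Function.Periodic.sum_Ico_eq_sum_range {M : Type*} [AddCommGroup M] {h : ℕ → M} {m : ℕ}
    (hh : Function.Periodic h m) (s : ℕ) :
    ∑ i ∈ Ico s (s + m), h i = ∑ i ∈ range m, h i := by
  induction s with
  | zero => rw [zero_add, range_eq_Ico]
  | succ s ih =>
    have h₁ := sum_eq_sum_Ico_succ_bot (show s < s + m + 1 by omega) h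
    have h₂ := sum_Ico_succ_top (show s ≤ s + m by omega) h
    rw [hh s, h₁] at h₂
    rw [← ih, show s + 1 + m = s + m + 1 by omega]
    exact add_left_cancel (h₂.trans (add_comm _ _))

lemma Finset.exists_monotone_fin_subset_range {α : Type*} [LinearOrder α] (A : Finset α)
    (hA : A.Nonempty) {k : ℕ} (hk : #A ≤ k) :
    ∃ a : Fin k → α, Monotone a ∧ ↑A ⊆ Set.range a := by
  have hpos : 0 < #A := hA.card_pos
  let e := A.orderEmbOfFin rfl
  refine ⟨fun j => e ⟨min j (#A - 1), by omega⟩, fun i j hij => e.monotone ?_, fun x hx => ?_⟩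
  · simp only [Fin.mk_le_mk]; exact min_le_min_right _ hij
  · rw [← A.range_orderEmbOfFin rfl] at hx
    obtain ⟨j, rfl⟩ := hx
    exact ⟨⟨j, by omega⟩, congrArg e (Fin.ext (by simp; omega))⟩

section SuppNorm
variable {d : ℕ} {T : Set (EuclideanSpace ℝ (Fin d))}

lemma le_suppNorm (hT : IsCompact T) {p : EuclideanSpace ℝ (Fin d)} (hp : p ∈ T)
    (q : EuclideanSpace ℝ (Fin d)) : ⟪p, q⟫ ≤ suppNorm T q :=
  le_csSup (hT.image (continuous_id.inner continuous_const)).bddAbove ⟨p, hp, rfl⟩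

lemma suppNorm_le {q : EuclideanSpace ℝ (Fin d)} {c : ℝ} (hT : T.Nonempty)
    (h : ∀ p ∈ T, ⟪p, q⟫ ≤ c) : suppNorm T q ≤ c :=
  csSup_le (hT.image _) (by rintro _ ⟨p, hp, rfl⟩; exact h p hp)

lemma suppNorm_nonneg (hT : IsCompact T) (h0 : 0 ∈ T) (q : EuclideanSpace ℝ (Fin d)) :
    0 ≤ suppNorm T q := by
  simpa using le_suppNorm hT h0 q

lemma suppNorm_zero (hT : T.Nonempty) : suppNorm T 0 = 0 := by
  simp [suppNorm, hT.image_const]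

lemma suppNorm_add_le (hT : IsCompact T) (hne : T.Nonempty) (a b : EuclideanSpace ℝ (Fin d)) :
    suppNorm T (a + b) ≤ suppNorm T a + suppNorm T b :=
  suppNorm_le hne fun p hp => by
    rw [inner_add_right]; exact add_le_add (le_suppNorm hT hp a) (le_suppNorm hT hp b)

lemma continuous_suppNorm (hT : IsCompact T) : Continuous (suppNorm T) :=
  hT.continuous_sSup (continuous_snd.inner continuous_fst)

lemma exists_pos_mul_norm_le_suppNorm (hT : IsCompact T) (h0 : 0 ∈ interior T) :
    ∃ r > 0, ∀ w, r * ‖w‖ ≤ suppNorm T w := by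
  obtain ⟨r, hr, hball⟩ := Metric.nhds_basis_closedBall.mem_iff.1 (mem_interior_iff_mem_nhds.1 h0)
  refine ⟨r, hr, fun w => ?_⟩
  rcases eq_or_ne w 0 with rfl | hw
  · simp [suppNorm_zero ⟨0, interior_subset h0⟩]
  have hp : (r / ‖w‖) • w ∈ T := hball (by simp [norm_smul, abs_of_pos hr, norm_ne_zero_iff.2 hw])
  calc r * ‖w‖ = ⟪(r / ‖w‖) • w, w⟫ := by
        rw [real_inner_smul_left, real_inner_self_eq_norm_sq]; field_simp
    _ ≤ suppNorm T w := le_suppNorm hT hp w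

end SuppNorm

section Polygon
variable {d : ℕ} {T : Set (EuclideanSpace ℝ (Fin d))}

lemma cyc_eq_natCast {m : ℕ} [NeZero m] (i : Fin m) : cyc i = ((i + 1 : ℕ) : Fin m) := rfl

lemma polyLen_eq_sum_Ico {m : ℕ} [NeZero m] (q : Fin m → EuclideanSpace ℝ (Fin d)) (s : ℕ) :
    polyLen T q = ∑ i ∈ Ico s (s + m), suppNorm T (q (i + 1 : ℕ) - q i) := by
  have hper : Function.Periodic (fun i : ℕ => suppNorm T (q (i + 1 : ℕ) - q i)) m := by
    intro i; simp [add_right_comm i m 1]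
  rw [hper.sum_Ico_eq_sum_range, ← Fin.sum_univ_eq_sum_range]
  simp [polyLen, cyc_eq_natCast]

lemma polyLen_nonneg (hT : IsCompact T) (h0 : 0 ∈ T) {m : ℕ}
    (q : Fin m → EuclideanSpace ℝ (Fin d)) : 0 ≤ polyLen T q :=
  sum_nonneg fun _ _ => suppNorm_nonneg hT h0 _

lemma polyLen_sub_const {m : ℕ} (q : Fin m → EuclideanSpace ℝ (Fin d))
    (c : EuclideanSpace ℝ (Fin d)) : polyLen T (fun i => q i - c) = polyLen T q := by
  simp [polyLen]

lemma continuous_polyLen (hT : IsCompact T) {m : ℕ} :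
    Continuous fun q : Fin m → EuclideanSpace ℝ (Fin d) => polyLen T q :=
  continuous_finsetSum _ fun i _ =>
    (continuous_suppNorm hT).comp ((continuous_apply (cyc i)).sub (continuous_apply i))

end Polygon

section Subpolygon
variable {d : ℕ} {T : Set (EuclideanSpace ℝ (Fin d))}

lemma suppNorm_sub_le_polyLen (hT : IsCompact T) (h0 : 0 ∈ T) {m : ℕ}
    (q : Fin m → EuclideanSpace ℝ (Fin d)) {i j : Fin m} (hij : j ≤ i) :
    suppNorm T (q i - q j) ≤ polyLen T q := by
  have : NeZero m := ⟨i.pos.ne'⟩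
  let f : ℕ → EuclideanSpace ℝ (Fin d) := fun l => q l
  calc suppNorm T (q i - q j) = suppNorm T (f i - f j) := by simp [f]
    _ ≤ ∑ l ∈ Ico (j : ℕ) i, suppNorm T (f (l + 1) - f l) :=
      le_sum_Ico_of_subadditive (suppNorm_zero ⟨0, h0⟩) (suppNorm_add_le hT ⟨0, h0⟩) f hij
    _ ≤ ∑ l ∈ Ico 0 (0 + m), suppNorm T (f (l + 1) - f l) :=
      sum_le_sum_of_subset_of_nonneg (Ico_subset_Ico (Nat.zero_le _) (by omega))
        fun _ _ _ => suppNorm_nonneg hT h0 _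
    _ = polyLen T q := (polyLen_eq_sum_Ico q 0).symm

lemma polyLen_comp_le_of_monotone (hT : IsCompact T) (h0 : 0 ∈ T) {m k : ℕ} [NeZero m]
    [NeZero k] (q : Fin m → EuclideanSpace ℝ (Fin d)) {a : Fin k → Fin m} (ha : Monotone a) :
    polyLen T (q ∘ a) ≤ polyLen T q := by
  let f : ℕ → EuclideanSpace ℝ (Fin d) := fun i => q i
  -- the vertices of `q ∘ a`, followed by the first one again, one period later
  let b : ℕ → ℕ := fun j => if j < k then a j else a 0 + m
  have hb : Monotone b := by
    intro i j hij
    simp only [b]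
    split_ifs with hi hj hj
    · exact ha (Fin.le_def.2 (by simp [Nat.mod_eq_of_lt hi, Nat.mod_eq_of_lt hj, hij]))
    · have := (a i).isLt; omega
    · omega
    · exact le_rfl
  have hfb : ∀ j ≤ k, q (a j) = f (b j) := by
    intro j hj
    rcases hj.lt_or_eq with hj | rfl
    · simp [f, b, hj]
    · simp [f, b]
  calc polyLen T (q ∘ a) = ∑ j ∈ range k, suppNorm T (f (b (j + 1)) - f (b j)) := by
        rw [polyLen_eq_sum_Ico _ 0, zero_add, ← range_eq_Ico]
        refine sum_congr rfl fun j hj => ?_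
        rw [mem_range] at hj
        simp only [Function.comp_apply, hfb j hj.le, hfb (j + 1) hj]
    _ ≤ ∑ i ∈ Ico (b 0) (b k), suppNorm T (f (i + 1) - f i) :=
      sum_le_sum_Ico_of_monotone (suppNorm_zero ⟨0, h0⟩) (suppNorm_add_le hT ⟨0, h0⟩) f hb k
    _ = polyLen T q := by
      simp only [b, NeZero.pos k, lt_irrefl, if_true, if_false]
      exact (polyLen_eq_sum_Ico q _).symm

end Subpolygon

section NotFit
variable {d : ℕ} {K T : Set (EuclideanSpace ℝ (Fin d))}

lemma NotFit.pos {m : ℕ} {q : Fin m → EuclideanSpace ℝ (Fin d)} (hq : NotFit K q) : 0 < m :=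
  Nat.pos_of_ne_zero fun hm => by subst hm; exact hq 0 finZeroElim

lemma NotFit.sub_const {m : ℕ} {q : Fin m → EuclideanSpace ℝ (Fin d)} (hq : NotFit K q)
    (c : EuclideanSpace ℝ (Fin d)) : NotFit K fun i => q i - c :=
  fun t ht => hq (c + t) fun i => by simpa [sub_sub] using ht i

lemma isClosed_setOf_notFit {m : ℕ} :
    IsClosed {q : Fin m → EuclideanSpace ℝ (Fin d) | NotFit K q} := by
  simp only [NotFit, Set.ofPred_forall]
  refine isClosed_iInter fun t => ?_
  simp only [not_forall, Set.ofPred_exists]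
  exact isClosed_iUnion_of_finite fun i =>
    (isOpen_interior.preimage ((continuous_apply i).sub continuous_const)).isClosed_compl

/-- Helly's theorem, applied to the convex sets `{t | q i - t ∈ interior K}`. -/
lemma NotFit.exists_finset_card_le (hK : Convex ℝ K) {m : ℕ}
    {q : Fin m → EuclideanSpace ℝ (Fin d)} (hq : NotFit K q) :
    ∃ A : Finset (Fin m), #A ≤ d + 1 ∧ ∀ t, ∃ i ∈ A, q i - t ∉ interior K := by
  by_contra! h
  obtain ⟨t, ht⟩ := Convex.helly_theorem' (𝕜 := ℝ) (s := univ)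
    (F := fun i => {t | q i - t ∈ interior K})
    (fun i _ => by
      simpa [Set.preimage, neg_add_eq_sub] using hK.interior.neg.translate_preimage_right (-q i))
    fun A _ hA => by
      simpa [Set.Nonempty] using h A (by simpa [finrank_euclideanSpace_fin] using hA)
  exact hq t fun i => Set.mem_iInter₂.1 ht i (mem_univ i)

end NotFit

section Minimizer
variable {d : ℕ} {K T : Set (EuclideanSpace ℝ (Fin d))}

lemma NotFit.exists_polyLen_le (hK : Convex ℝ K) (hT : IsCompact T) (h0 : 0 ∈ T) {m : ℕ}
    {q : Fin m → EuclideanSpace ℝ (Fin d)} (hq : NotFit K q) :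
    ∃ Q : Fin (d + 1) → EuclideanSpace ℝ (Fin d),
      NotFit K Q ∧ Q 0 = 0 ∧ polyLen T Q ≤ polyLen T q := by
  have : NeZero m := ⟨hq.pos.ne'⟩
  obtain ⟨A, hAcard, hA⟩ := hq.exists_finset_card_le hK
  obtain ⟨i₀, hi₀, -⟩ := hA 0
  obtain ⟨a, ha, hAa⟩ := A.exists_monotone_fin_subset_range ⟨i₀, hi₀⟩ hAcard
  have hqa : NotFit K (q ∘ a) := fun t ht => by
    obtain ⟨i, hi, hit⟩ := hA t
    obtain ⟨j, rfl⟩ := hAa hi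
    exact hit (ht j)
  refine ⟨fun j => q (a j) - q (a 0), hqa.sub_const _, sub_self _, ?_⟩
  rw [polyLen_sub_const]
  exact polyLen_comp_le_of_monotone hT h0 q ha

lemma norm_le_polyLen_div (hT : IsCompact T) (h0 : 0 ∈ T) {r : ℝ} (hr : 0 < r)
    (hrT : ∀ w, r * ‖w‖ ≤ suppNorm T w) {k : ℕ} [NeZero k]
    {Q : Fin k → EuclideanSpace ℝ (Fin d)} (hQ : Q 0 = 0) : ‖Q‖ ≤ polyLen T Q / r := by
  refine (pi_norm_le_iff_of_nonneg (by positivity [polyLen_nonneg hT h0 Q])).2 fun i => ?_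
  rw [le_div_iff₀' hr]
  calc r * ‖Q i‖ = r * ‖Q i - Q 0‖ := by rw [hQ, sub_zero]
    _ ≤ suppNorm T (Q i - Q 0) := hrT _
    _ ≤ polyLen T Q := suppNorm_sub_le_polyLen hT h0 Q (Fin.zero_le i)

lemma exists_isMinOn_polyLen (hT : IsCompact T) (h0 : 0 ∈ interior T) {k : ℕ} [NeZero k]
    {Q₀ : Fin k → EuclideanSpace ℝ (Fin d)} (hQ₀ : NotFit K Q₀ ∧ Q₀ 0 = 0) :
    ∃ Q : Fin k → EuclideanSpace ℝ (Fin d),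
      (NotFit K Q ∧ Q 0 = 0) ∧ IsMinOn (polyLen T) {Q | NotFit K Q ∧ Q 0 = 0} Q := by
  obtain ⟨r, hr, hrT⟩ := exists_pos_mul_norm_le_suppNorm hT h0
  refine (continuous_polyLen hT).continuousOn.exists_isMinOn'
    (isClosed_setOf_notFit.inter (isClosed_eq (continuous_apply 0) continuous_const)) hQ₀ ?_
  filter_upwards [mem_inf_of_left (tendsto_norm_cocompact_atTop.eventually_ge_atTop
    (polyLen T Q₀ / r)), mem_inf_of_right (mem_principal_self _)] with Q hQ hQP
  exact (div_le_div_iff_of_pos_right hr).1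
    (hQ.trans (norm_le_polyLen_div hT (interior_subset h0) hr hrT hQP.2))

end Minimizer

lemma exists_notFit {d : ℕ} (hd : 1 ≤ d) {K : Set (EuclideanSpace ℝ (Fin d))}
    (hK : Bornology.IsBounded K) : ∃ q : Fin 2 → EuclideanSpace ℝ (Fin d), NotFit K q := by
  have : Nontrivial (EuclideanSpace ℝ (Fin d)) := by
    have : Nonempty (Fin d) := ⟨⟨0, hd⟩⟩
    infer_instance
  obtain ⟨v, hv⟩ : ∃ v, v ∉ K - K := by
    by_contra! h
    exact NormedSpace.unbounded_univ ℝ _ ((hK.sub hK).subset fun v _ => h v)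
  refine ⟨![0, v], fun t ht => hv ⟨v - t, interior_subset (ht 1), -t, ?_, by simp⟩⟩
  simpa using interior_subset (ht 0)

theorem xi_attained_general (n : ℕ) (hn : 1 ≤ n)
    (K T : Set (EuclideanSpace ℝ (Fin n)))
    (hK : IsConvexBody K) (hT : IsConvexBody T)
    (hT0 : (0 : EuclideanSpace ℝ (Fin n)) ∈ interior T) :
    ∃ m : ℕ, 2 ≤ m ∧ m ≤ n + 1 ∧ ∃ q : Fin m → EuclideanSpace ℝ (Fin n),
      NotFit K q ∧ polyLen T q = xi T K := by
  obtain ⟨q, hq⟩ := exists_notFit hn hK.1.isBounded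
  obtain ⟨Q₀, hQ₀, hQ₀0, -⟩ := hq.exists_polyLen_le hK.2.1 hT.1 (interior_subset hT0)
  obtain ⟨Q, hQ, hmin⟩ := exists_isMinOn_polyLen hT.1 hT0 ⟨hQ₀, hQ₀0⟩
  refine ⟨n + 1, by omega, le_rfl, Q, hQ.1, ?_⟩
  unfold xi
  symm
  refine IsLeast.csInf_eq ⟨⟨n + 1, by omega, Q, hQ.1, rfl⟩, ?_⟩
  rintro _ ⟨m, -, q, hq, rfl⟩
  obtain ⟨Q', hQ', hQ'0, hle⟩ := hq.exists_polyLen_le hK.2.1 hT.1 (interior_subset hT0)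
  exact (hmin ⟨hQ', hQ'0⟩).trans hle

/-- Bezdek–Bezdek / Akopyan–Karasev: the infimum defining `ξ_T(K)` is
attained by a closed polygonal line with at most `n + 1` vertices. -/
theorem xi_attained (n : ℕ) (hn : 1 ≤ n)
    (K T : Set (EuclideanSpace ℝ (Fin n)))
    (hK : IsConvexBody K) (hT : IsConvexBody T)
    (hK0 : (0 : EuclideanSpace ℝ (Fin n)) ∈ interior K)
    (hT0 : (0 : EuclideanSpace ℝ (Fin n)) ∈ interior T) :
    ∃ m : ℕ, 2 ≤ m ∧ m ≤ n + 1 ∧ ∃ q : Fin m → EuclideanSpace ℝ (Fin n),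
      NotFit K q ∧ polyLen T q = xi T K :=
  xi_attained_general n hn K T hK hT hT0
end
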